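/- arXiv:1206.2946 — 11 statements merged into one kernel-verified Lean document; each statement's English description precedes it below -/
import Mathlib

section
/- Let A be a category with a class of morphisms E satisfying (E1)–(E4). Given a commutative diagram where f₁ : A₁ → B₁ and f₀ : A₀ → B₀ are in E with kernel pairs R[f₁] and R[f₀], vertical morphisms a : A₁ → A₀, b : B₁ → B₀ in E and induced r : R[f₁] → R[f₀], the square (a, f₁) : f₁ → f₀ (i.e., the square with sides a, b, f₁, f₀) is a double extension if and only if either of the two squares formed by the kernel-pair projections together with r and a is a double extension. -/
/-!
Write `P = A₀ ×_{B₀} B₁` with comparison `c : A₁ ⟶ P`, and `Q = R₀ ×_{A₀} A₁` (along `q₀`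
and `a`) with comparison `d : R₁ ⟶ Q`. The map `e : Q ⟶ P`, `(x, y) ↦ (q₁ x, f₁ y)`, is a
pullback of `f₁`, and the square `d, p₁, e, c` is a pullback. Hence `c ∈ E` forces `d ∈ E` by
stability under pullback, and conversely `d ∈ E` gives `p₁ ≫ c = d ≫ e ∈ E`, so `c ∈ E` by (E4).
-/

open CategoryTheory CategoryTheory.Limits

/-- A commutative square (top `f₁`, left `a`, right `b`, bottom `f₀`) is a
*double extension* with respect to a class `E` when all four sides are in `E`,
the pullback of the bottom and right sides exists, and the comparison morphism
to it is in `E`. -/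
def IsDblExt {C : Type*} [Category C] (E : MorphismProperty C)
    {A₁ A₀ B₁ B₀ : C} (f₁ : A₁ ⟶ B₁) (a : A₁ ⟶ A₀) (b : B₁ ⟶ B₀) (f₀ : A₀ ⟶ B₀) : Prop :=
  E f₁ ∧ E a ∧ E b ∧ E f₀ ∧
  ∃ (P : C) (pA : P ⟶ A₀) (pB : P ⟶ B₁) (c : A₁ ⟶ P),
    IsPullback pA pB f₀ b ∧ c ≫ pA = a ∧ c ≫ pB = f₁ ∧ E c

section

variable {C : Type*} [Category C]

lemma isPullback_kernelPair_lift {A₁ A₀ B₁ B₀ R₀ P Q : C}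
    {f₁ : A₁ ⟶ B₁} {f₀ : A₀ ⟶ B₀} {a : A₁ ⟶ A₀} {b : B₁ ⟶ B₀} (w : f₁ ≫ b = a ≫ f₀)
    {q₀ q₁ : R₀ ⟶ A₀} (hR₀ : IsPullback q₀ q₁ f₀ f₀)
    {pA : P ⟶ A₀} {pB : P ⟶ B₁} (hP : IsPullback pA pB f₀ b)
    {qR : Q ⟶ R₀} {qA : Q ⟶ A₁} (hQ : IsPullback qR qA q₀ a)
    {e : Q ⟶ P} (he₁ : e ≫ pA = qR ≫ q₁) (he₂ : e ≫ pB = qA ≫ f₁) :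
    IsPullback e qA pB f₁ := by
  have hQR₀ : IsPullback (qR ≫ q₁) qA f₀ (f₁ ≫ b) := by
    simpa only [w] using hQ.paste_horiz hR₀.flip
  exact IsPullback.of_right (by rwa [he₁]) he₂ hP

lemma isPullback_comparison_kernelPair {A₁ A₀ B₁ B₀ R₁ R₀ P Q : C}
    {f₁ : A₁ ⟶ B₁} {f₀ : A₀ ⟶ B₀} {a : A₁ ⟶ A₀} {b : B₁ ⟶ B₀}
    {p₀ p₁ : R₁ ⟶ A₁} (hR₁ : IsPullback p₀ p₁ f₁ f₁)
    {q₁ : R₀ ⟶ A₀} {r : R₁ ⟶ R₀} (hr₁ : r ≫ q₁ = p₁ ≫ a)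
    {pA : P ⟶ A₀} {pB : P ⟶ B₁} (hP : IsPullback pA pB f₀ b)
    {c : A₁ ⟶ P} (hc₁ : c ≫ pA = a) (hc₂ : c ≫ pB = f₁)
    {qR : Q ⟶ R₀} {qA : Q ⟶ A₁} {d : R₁ ⟶ Q} (hd₁ : d ≫ qR = r) (hd₂ : d ≫ qA = p₀)
    {e : Q ⟶ P} (he₁ : e ≫ pA = qR ≫ q₁) (he : IsPullback e qA pB f₁) :
    IsPullback d p₁ e c := by
  have hcomm : p₁ ≫ c = d ≫ e := by
    apply hP.hom_ext
    · rw [Category.assoc, Category.assoc, hc₁, he₁, reassoc_of% hd₁, hr₁]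
    · rw [Category.assoc, Category.assoc, hc₂, he.w, reassoc_of% hd₂, hR₁.w]
  have hR₁' : IsPullback p₁ (d ≫ qA) (c ≫ pB) f₁ := by
    rw [hd₂, hc₂]; exact hR₁.flip
  exact (IsPullback.of_bot hR₁' hcomm he).flip

lemma comparison_mem_iff_of_kernelPair (E : MorphismProperty C)
    (hE2stable : ∀ {P X Y Z : C} (fst : P ⟶ X) (snd : P ⟶ Y) (f : X ⟶ Z) (g : Y ⟶ Z),
      IsPullback fst snd f g → E g → E fst)
    (hE3 : ∀ {X Y Z : C} (f : X ⟶ Y) (g : Y ⟶ Z), E f → E g → E (f ≫ g))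
    (hE4 : ∀ {X Y Z : C} (f : X ⟶ Y) (g : Y ⟶ Z), E (f ≫ g) → E g)
    {A₁ A₀ B₁ B₀ R₁ R₀ P Q : C}
    {f₁ : A₁ ⟶ B₁} {f₀ : A₀ ⟶ B₀} {a : A₁ ⟶ A₀} {b : B₁ ⟶ B₀} (hf₁ : E f₁)
    (w : f₁ ≫ b = a ≫ f₀)
    {p₀ p₁ : R₁ ⟶ A₁} (hR₁ : IsPullback p₀ p₁ f₁ f₁)
    {q₀ q₁ : R₀ ⟶ A₀} (hR₀ : IsPullback q₀ q₁ f₀ f₀)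
    {r : R₁ ⟶ R₀} (hr₁ : r ≫ q₁ = p₁ ≫ a)
    {pA : P ⟶ A₀} {pB : P ⟶ B₁} (hP : IsPullback pA pB f₀ b)
    {c : A₁ ⟶ P} (hc₁ : c ≫ pA = a) (hc₂ : c ≫ pB = f₁)
    {qR : Q ⟶ R₀} {qA : Q ⟶ A₁} (hQ : IsPullback qR qA q₀ a)
    {d : R₁ ⟶ Q} (hd₁ : d ≫ qR = r) (hd₂ : d ≫ qA = p₀) :
    E c ↔ E d := by
  have hcomm : (qR ≫ q₁) ≫ f₀ = (qA ≫ f₁) ≫ b := by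
    rw [Category.assoc, ← hR₀.w, reassoc_of% hQ.w, Category.assoc, w]
  let e : Q ⟶ P := hP.lift (qR ≫ q₁) (qA ≫ f₁) hcomm
  have he₁ : e ≫ pA = qR ≫ q₁ := hP.lift_fst _ _ hcomm
  have he : IsPullback e qA pB f₁ :=
    isPullback_kernelPair_lift w hR₀ hP hQ he₁ (hP.lift_snd _ _ hcomm)
  have hde : IsPullback d p₁ e c :=
    isPullback_comparison_kernelPair hR₁ hr₁ hP hc₁ hc₂ hd₁ hd₂ he₁ he
  refine ⟨hE2stable d p₁ e c hde, fun hd => hE4 p₁ c ?_⟩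
  rw [← hde.w]
  exact hE3 d e hd (hE2stable e qA pB f₁ he hf₁)

lemma isDblExt_kernelPair_iff (E : MorphismProperty C)
    (hE2exists : ∀ {X Y Z : C} (f : X ⟶ Z) (g : Y ⟶ Z), E f → HasPullback g f)
    (hE2stable : ∀ {P X Y Z : C} (fst : P ⟶ X) (snd : P ⟶ Y) (f : X ⟶ Z) (g : Y ⟶ Z),
      IsPullback fst snd f g → E g → E fst)
    (hE3 : ∀ {X Y Z : C} (f : X ⟶ Y) (g : Y ⟶ Z), E f → E g → E (f ≫ g))
    (hE4 : ∀ {X Y Z : C} (f : X ⟶ Y) (g : Y ⟶ Z), E (f ≫ g) → E g)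
    {A₁ A₀ B₁ B₀ R₁ R₀ : C}
    {f₁ : A₁ ⟶ B₁} {f₀ : A₀ ⟶ B₀} {a : A₁ ⟶ A₀} {b : B₁ ⟶ B₀}
    (hf₁ : E f₁) (hf₀ : E f₀) (ha : E a) (hb : E b) (w : f₁ ≫ b = a ≫ f₀)
    {p₀ p₁ : R₁ ⟶ A₁} (hR₁ : IsPullback p₀ p₁ f₁ f₁)
    {q₀ q₁ : R₀ ⟶ A₀} (hR₀ : IsPullback q₀ q₁ f₀ f₀)
    {r : R₁ ⟶ R₀} (hr₀ : r ≫ q₀ = p₀ ≫ a) (hr₁ : r ≫ q₁ = p₁ ≫ a) :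
    IsDblExt E p₀ r a q₀ ↔ IsDblExt E f₁ a b f₀ := by
  constructor
  · rintro ⟨-, -, -, -, Q, qR, qA, d, hQ, hd₁, hd₂, hd⟩
    have := hE2exists b f₀ hb
    have hP := IsPullback.of_hasPullback f₀ b
    have hc : E (pullback.lift a f₁ w.symm) :=
      (comparison_mem_iff_of_kernelPair E hE2stable hE3 hE4 hf₁ w hR₁ hR₀ hr₁ hP
        (pullback.lift_fst _ _ _) (pullback.lift_snd _ _ _) hQ hd₁ hd₂).2 hd
    exact ⟨hf₁, ha, hb, hf₀, _, _, _, _, hP,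
      pullback.lift_fst _ _ _, pullback.lift_snd _ _ _, hc⟩
  · rintro ⟨-, -, -, -, P, pA, pB, c, hP, hc₁, hc₂, hc⟩
    have := hE2exists a q₀ ha
    have hQ := IsPullback.of_hasPullback q₀ a
    have hd : E (pullback.lift r p₀ hr₀) :=
      (comparison_mem_iff_of_kernelPair E hE2stable hE3 hE4 hf₁ w hR₁ hR₀ hr₁ hP hc₁ hc₂
        hQ (pullback.lift_fst _ _ _) (pullback.lift_snd _ _ _)).1 hc
    have hr : E r := by
      rw [← pullback.lift_fst r p₀ hr₀]
      exact hE3 _ _ hd (hE2stable _ _ _ _ hQ ha)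
    exact ⟨hE2stable _ _ _ _ hR₁ hf₁, hr, ha, hE2stable _ _ _ _ hR₀ hf₀, _, _, _, _, hQ,
      pullback.lift_fst _ _ _, pullback.lift_snd _ _ _, hd⟩

end

theorem stmt4_general {C : Type*} [Category C] (E : MorphismProperty C)
    (hE2exists : ∀ {X Y Z : C} (f : X ⟶ Z) (g : Y ⟶ Z), E f → HasPullback g f)
    (hE2stable : ∀ {P X Y Z : C} (fst : P ⟶ X) (snd : P ⟶ Y) (f : X ⟶ Z) (g : Y ⟶ Z),
      IsPullback fst snd f g → E g → E fst)
    (hE3 : ∀ {X Y Z : C} (f : X ⟶ Y) (g : Y ⟶ Z), E f → E g → E (f ≫ g))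
    (hE4 : ∀ {X Y Z : C} (f : X ⟶ Y) (g : Y ⟶ Z), E (f ≫ g) → E g)
    {A₁ A₀ B₁ B₀ R₁ R₀ : C}
    (f₁ : A₁ ⟶ B₁) (f₀ : A₀ ⟶ B₀) (a : A₁ ⟶ A₀) (b : B₁ ⟶ B₀)
    (hf₁ : E f₁) (hf₀ : E f₀) (ha : E a) (hb : E b)
    (w : f₁ ≫ b = a ≫ f₀)
    (p₀ p₁ : R₁ ⟶ A₁) (hR₁ : IsPullback p₀ p₁ f₁ f₁)
    (q₀ q₁ : R₀ ⟶ A₀) (hR₀ : IsPullback q₀ q₁ f₀ f₀)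
    (r : R₁ ⟶ R₀) (hr₀ : r ≫ q₀ = p₀ ≫ a) (hr₁ : r ≫ q₁ = p₁ ≫ a) :
    (IsDblExt E p₀ r a q₀ ↔ IsDblExt E f₁ a b f₀) ∧
    (IsDblExt E p₁ r a q₁ ↔ IsDblExt E f₁ a b f₀) :=
  ⟨isDblExt_kernelPair_iff E hE2exists hE2stable hE3 hE4 hf₁ hf₀ ha hb w hR₁ hR₀ hr₀ hr₁,
    isDblExt_kernelPair_iff E hE2exists hE2stable hE3 hE4 hf₁ hf₀ ha hb w
      hR₁.flip hR₀.flip hr₁ hr₀⟩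

/-- under (E1)–(E4), given a commutative square of `E`-morphisms with
kernel pairs `R[f₁]`, `R[f₀]` and the induced morphism `r` between them, either of the
two kernel-pair squares is a double extension iff the original square is one. -/
theorem stmt4 {C : Type*} [Category C] (E : MorphismProperty C)
    (hE1 : ∀ {X Y : C} (f : X ⟶ Y), IsIso f → E f)
    (hE2exists : ∀ {X Y Z : C} (f : X ⟶ Z) (g : Y ⟶ Z), E f → HasPullback g f)
    (hE2stable : ∀ {P X Y Z : C} (fst : P ⟶ X) (snd : P ⟶ Y) (f : X ⟶ Z) (g : Y ⟶ Z),
      IsPullback fst snd f g → E g → E fst)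
    (hE3 : ∀ {X Y Z : C} (f : X ⟶ Y) (g : Y ⟶ Z), E f → E g → E (f ≫ g))
    (hE4 : ∀ {X Y Z : C} (f : X ⟶ Y) (g : Y ⟶ Z), E (f ≫ g) → E g)
    {A₁ A₀ B₁ B₀ R₁ R₀ : C}
    (f₁ : A₁ ⟶ B₁) (f₀ : A₀ ⟶ B₀) (a : A₁ ⟶ A₀) (b : B₁ ⟶ B₀)
    (hf₁ : E f₁) (hf₀ : E f₀) (ha : E a) (hb : E b)
    (w : f₁ ≫ b = a ≫ f₀)
    (p₀ p₁ : R₁ ⟶ A₁) (hR₁ : IsPullback p₀ p₁ f₁ f₁)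
    (q₀ q₁ : R₀ ⟶ A₀) (hR₀ : IsPullback q₀ q₁ f₀ f₀)
    (r : R₁ ⟶ R₀) (hr₀ : r ≫ q₀ = p₀ ≫ a) (hr₁ : r ≫ q₁ = p₁ ≫ a) :
    (IsDblExt E p₀ r a q₀ ↔ IsDblExt E f₁ a b f₀) ∧
    (IsDblExt E p₁ r a q₁ ↔ IsDblExt E f₁ a b f₀) :=
  stmt4_general E hE2exists hE2stable hE3 hE4 f₁ f₀ a b hf₁ hf₀ ha hb w p₀ p₁ hR₁ q₀ q₁ hR₀ r hr₀
    hr₁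
end

section
/- Let A be a category and E a class of morphisms satisfying (E1)–(E4). Then the following are equivalent: (i) the class E¹ of double extensions satisfies right cancellation (g∘f ∈ E¹ implies g ∈ E¹); (ii) every split epimorphism between morphisms of E (a commutative square with horizontal split epimorphisms and vertical morphisms in E) is a double extension; (iii) every split epimorphism of split epimorphisms is a double extension. -/
/-!
(i) ⇒ (ii): a split epimorphism of extensions, precomposed with its splitting, is the identity
square on its codomain, which is a double extension. (ii) ⇒ (iii): split epimorphisms lie in `E`.

The converses pass to kernel pairs. A square `(f₁, a, b, f₀)` of extensions is a double extension
as soon as the square formed by `f₁` and the induced map of kernel pairs `R[a] ⟶ R[b]` has its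
comparison morphism in `E`, by right cancellation in `E`. The kernel-pair square of a split
epimorphism of extensions is a split epimorphism of split epimorphisms, split by the diagonals;
this gives (iii) ⇒ (ii). For (ii) ⇒ (i), the kernel-pair map of a double extension lies in `E`,
hence by right cancellation so does the kernel-pair map of the second factor `g`, and (ii)
applies to the transposed kernel-pair square of `g`.
-/

open CategoryTheory CategoryTheory.Limits

/-- (i): the class `E¹` of double extensions satisfies right cancellation: if a
composite of morphisms of extensions is a double extension then the second factor
is one. -/
def CondI {C : Type*} [Category C] (E : MorphismProperty C) : Prop :=
  ∀ {A₁ A₀ B₁ B₀ C₁ C₀ : C} (a : A₁ ⟶ A₀) (b : B₁ ⟶ B₀) (c : C₁ ⟶ C₀)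
    (f₁ : A₁ ⟶ B₁) (f₀ : A₀ ⟶ B₀) (g₁ : B₁ ⟶ C₁) (g₀ : B₀ ⟶ C₀),
    E a → E b → E c → f₁ ≫ b = a ≫ f₀ → g₁ ≫ c = b ≫ g₀ →
    IsDblExt E (f₁ ≫ g₁) a c (f₀ ≫ g₀) → IsDblExt E g₁ b c g₀

/-- (ii): every split epimorphism between morphisms of `E` (a square whose
horizontal arrows are split epimorphisms, with compatible splittings, and whose
vertical arrows are in `E`) is a double extension. -/
def CondII {C : Type*} [Category C] (E : MorphismProperty C) : Prop :=
  ∀ {A₁ A₀ B₁ B₀ : C} (a : A₁ ⟶ A₀) (b : B₁ ⟶ B₀)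
    (f₁ : A₁ ⟶ B₁) (f₀ : A₀ ⟶ B₀) (s₁ : B₁ ⟶ A₁) (s₀ : B₀ ⟶ A₀),
    E a → E b → f₁ ≫ b = a ≫ f₀ → s₁ ≫ a = b ≫ s₀ →
    s₁ ≫ f₁ = 𝟙 B₁ → s₀ ≫ f₀ = 𝟙 B₀ → IsDblExt E f₁ a b f₀

/-- (iii): every split epimorphism of split epimorphisms (a commutative square of
split epimorphisms in both directions, with compatible splittings) is a double
extension. -/
def CondIII {C : Type*} [Category C] (E : MorphismProperty C) : Prop :=
  ∀ {A₁ A₀ B₁ B₀ : C} (a : A₁ ⟶ A₀) (b : B₁ ⟶ B₀)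
    (f₁ : A₁ ⟶ B₁) (f₀ : A₀ ⟶ B₀)
    (ta : A₀ ⟶ A₁) (tb : B₀ ⟶ B₁) (s₁ : B₁ ⟶ A₁) (s₀ : B₀ ⟶ A₀),
    f₁ ≫ b = a ≫ f₀ → s₁ ≫ a = b ≫ s₀ → ta ≫ f₁ = f₀ ≫ tb → s₀ ≫ ta = tb ≫ s₁ →
    s₁ ≫ f₁ = 𝟙 B₁ → s₀ ≫ f₀ = 𝟙 B₀ → ta ≫ a = 𝟙 A₀ → tb ≫ b = 𝟙 B₀ →
    IsDblExt E f₁ a b f₀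


section

open MorphismProperty

variable {C : Type*} [Category C] {E : MorphismProperty C}

lemma mem_of_comp_mem [E.HasOfPrecompProperty ⊤] {X Y Z : C} {f : X ⟶ Y} {g : Y ⟶ Z}
    (h : E (f ≫ g)) : E g :=
  E.of_precomp (W' := ⊤) f g trivial h

lemma mem_of_comp_eq_id [E.ContainsIdentities] [E.HasOfPrecompProperty ⊤]
    {X Y : C} {s : Y ⟶ X} {f : X ⟶ Y} (h : s ≫ f = 𝟙 Y) : E f :=
  mem_of_comp_mem (h ▸ E.id_mem Y)

def ComparisonIn (E : MorphismProperty C) {A₁ A₀ B₁ B₀ : C}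
    (f₁ : A₁ ⟶ B₁) (a : A₁ ⟶ A₀) (b : B₁ ⟶ B₀) (f₀ : A₀ ⟶ B₀) : Prop :=
  ∃ (P : C) (pA : P ⟶ A₀) (pB : P ⟶ B₁) (c : A₁ ⟶ P),
    IsPullback pA pB f₀ b ∧ c ≫ pA = a ∧ c ≫ pB = f₁ ∧ E c

section Squares

variable {A₁ A₀ B₁ B₀ : C} {f₁ : A₁ ⟶ B₁} {a : A₁ ⟶ A₀} {b : B₁ ⟶ B₀} {f₀ : A₀ ⟶ B₀}

lemma ComparisonIn.transpose (h : ComparisonIn E f₁ a b f₀) : ComparisonIn E a f₁ f₀ b := by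
  obtain ⟨P, pA, pB, c, hP, hcA, hcB, hc⟩ := h
  exact ⟨P, pB, pA, c, hP.flip, hcB, hcA, hc⟩

lemma isDblExt_id [E.ContainsIdentities] (hb : E b) : IsDblExt E (𝟙 B₁) b b (𝟙 B₀) :=
  ⟨E.id_mem _, hb, hb, E.id_mem _, B₁, b, 𝟙 B₁, 𝟙 B₁, (IsPullback.id_horiz b).flip,
    Category.id_comp b, Category.id_comp _, E.id_mem _⟩

noncomputable def kernelPairMap [HasPullback a a] [HasPullback b b] (w : f₁ ≫ b = a ≫ f₀) :
    pullback a a ⟶ pullback b b :=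
  pullback.lift (pullback.fst a a ≫ f₁) (pullback.snd a a ≫ f₁) (by
    simp only [Category.assoc, w, pullback.condition_assoc])

section KernelPairMap

variable [HasPullback a a] [HasPullback b b] (w : f₁ ≫ b = a ≫ f₀)

@[simp]
lemma kernelPairMap_fst : kernelPairMap w ≫ pullback.fst b b = pullback.fst a a ≫ f₁ :=
  pullback.lift_fst _ _ _

@[simp]
lemma kernelPairMap_snd : kernelPairMap w ≫ pullback.snd b b = pullback.snd a a ≫ f₁ :=
  pullback.lift_snd _ _ _

@[simp]
lemma kernelPairMap_fst_assoc {Z : C} (h : B₁ ⟶ Z) :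
    kernelPairMap w ≫ pullback.fst b b ≫ h = pullback.fst a a ≫ f₁ ≫ h := by
  rw [← Category.assoc, kernelPairMap_fst, Category.assoc]

@[simp]
lemma kernelPairMap_snd_assoc {Z : C} (h : B₁ ⟶ Z) :
    kernelPairMap w ≫ pullback.snd b b ≫ h = pullback.snd a a ≫ f₁ ≫ h := by
  rw [← Category.assoc, kernelPairMap_snd, Category.assoc]

lemma diagonal_kernelPairMap :
    pullback.diagonal a ≫ kernelPairMap w = f₁ ≫ pullback.diagonal b := by
  ext <;> simp

lemma kernelPairMap_comp {D₁ D₀ : C} {g₁ : B₁ ⟶ D₁} {d : D₁ ⟶ D₀} {g₀ : B₀ ⟶ D₀}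
    [HasPullback d d] (w' : g₁ ≫ d = b ≫ g₀) :
    kernelPairMap w ≫ kernelPairMap w' =
      kernelPairMap (show (f₁ ≫ g₁) ≫ d = a ≫ f₀ ≫ g₀ by
        rw [Category.assoc, w', reassoc_of% w]) := by
  ext <;> simp

/-- The comparison of the square, precomposed with `pullback.snd a a`, factors as the comparison
of the kernel-pair square followed by a base change of `a`. -/
lemma ComparisonIn.of_kernelPair [E.IsStableUnderBaseChange] [E.IsStableUnderComposition]
    [E.HasOfPrecompProperty ⊤] [HasPullback f₀ b] (ha : E a)
    (h : ComparisonIn E (kernelPairMap w) (pullback.fst a a) (pullback.fst b b) f₁) :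
    ComparisonIn E f₁ a b f₀ := by
  obtain ⟨P, pA, pB, e, hP, heA, heB, he⟩ := h
  have hQ := IsPullback.of_hasPullback f₀ b
  have hPb : IsPullback (pB ≫ pullback.snd b b) pA b (a ≫ f₀) :=
    w ▸ hP.flip.paste_horiz (IsPullback.of_hasPullback b b).flip
  have hφ := IsPullback.of_right' hPb hQ.flip
  set φ := hQ.flip.lift (pB ≫ pullback.snd b b) (pA ≫ a) _
  have hfactor : e ≫ φ = pullback.snd a a ≫ pullback.lift a f₁ w.symm := by
    apply hQ.hom_ext
    · simp [φ, reassoc_of% heA, pullback.condition, pullback.lift_fst]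
    · simp [φ, reassoc_of% heB, pullback.lift_snd]
  refine ⟨_, _, _, pullback.lift a f₁ w.symm, hQ, pullback.lift_fst _ _ _,
    pullback.lift_snd _ _ _, ?_⟩
  exact mem_of_comp_mem (hfactor ▸ E.comp_mem _ _ he (E.of_isPullback hφ.flip ha))

/-- The kernel-pair map factors through `P ×_{A₀} A₁`, where `P = A₀ ×_{B₀} B₁`, as a base
change of the comparison morphism followed by a base change of `f₁`. -/
lemma ComparisonIn.kernelPairMap_mem [E.IsStableUnderBaseChange] [E.IsStableUnderComposition]
    [HasPullbacksAlong a] (hf₁ : E f₁) (h : ComparisonIn E f₁ a b f₀) :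
    E (kernelPairMap w) := by
  obtain ⟨P, pA, pB, c, hP, hcA, hcB, hc⟩ := h
  have hL := IsPullback.of_hasPullback pA a
  have hKa : IsPullback (pullback.snd a a) (pullback.fst a a) (c ≫ pA) a := by
    rw [hcA]; exact (IsPullback.of_hasPullback a a).flip
  have hχ := IsPullback.of_bot' hKa hL
  have hψ := IsPullback.of_bot' (w ▸ hL.flip.paste_vert hP) (IsPullback.of_hasPullback b b)
  convert E.comp_mem _ _ (E.of_isPullback hχ hc) (E.of_isPullback hψ hf₁) using 1
  ext <;> simp [hcB]

end KernelPairMap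

end Squares

lemma condII_of_condI [E.ContainsIdentities] (hI : CondI E) : CondII E := by
  intro A₁ A₀ B₁ B₀ a b f₁ f₀ s₁ s₀ ha hb w ws hs₁ hs₀
  refine hI b a b s₁ s₀ f₁ f₀ hb ha hb ws w ?_
  rw [hs₁, hs₀]
  exact isDblExt_id hb

lemma condIII_of_condII [E.ContainsIdentities] [E.HasOfPrecompProperty ⊤] (hII : CondII E) :
    CondIII E := by
  intro A₁ A₀ B₁ B₀ a b f₁ f₀ ta tb s₁ s₀ w ws _ _ hs₁ hs₀ hta htb
  exact hII a b f₁ f₀ s₁ s₀ (mem_of_comp_eq_id hta) (mem_of_comp_eq_id htb) w ws hs₁ hs₀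

variable [E.HasOfPrecompProperty ⊤] [E.IsStableUnderComposition] [E.IsStableUnderBaseChange]

lemma condII_of_condIII [E.ContainsIdentities]
    (hpb : ∀ {X Y : C} (f : X ⟶ Y), E f → HasPullbacksAlong f) (hIII : CondIII E) : CondII E := by
  intro A₁ A₀ B₁ B₀ a b f₁ f₀ s₁ s₀ ha hb w ws hs₁ hs₀
  have : HasPullbacksAlong a := hpb a ha
  have : HasPullbacksAlong b := hpb b hb
  obtain ⟨-, -, -, -, hsplit⟩ :
      IsDblExt E (kernelPairMap w) (pullback.fst a a) (pullback.fst b b) f₁ :=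
    hIII _ _ _ _ (pullback.diagonal a) (pullback.diagonal b) (kernelPairMap ws) s₁
      (kernelPairMap_fst w) (kernelPairMap_fst ws) (diagonal_kernelPairMap w)
      (diagonal_kernelPairMap ws).symm (by ext <;> simp [hs₁]) hs₁
      (pullback.diagonal_fst a) (pullback.diagonal_fst b)
  exact ⟨mem_of_comp_eq_id hs₁, ha, hb, mem_of_comp_eq_id hs₀,
    ComparisonIn.of_kernelPair w ha hsplit⟩

lemma condI_of_condII (hpb : ∀ {X Y : C} (f : X ⟶ Y), E f → HasPullbacksAlong f)
    (hII : CondII E) : CondI E := by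
  intro A₁ A₀ B₁ B₀ C₁ C₀ a b c f₁ f₀ g₁ g₀ ha hb hc wf wg hfg
  obtain ⟨hfg₁, -, -, hfg₀, hcomp⟩ := hfg
  have : HasPullbacksAlong a := hpb a ha
  have : HasPullbacksAlong b := hpb b hb
  have : HasPullbacksAlong c := hpb c hc
  have hg₁ : E g₁ := mem_of_comp_mem hfg₁
  have hk : E (kernelPairMap wg) := by
    apply mem_of_comp_mem (f := kernelPairMap wf)
    rw [kernelPairMap_comp]
    exact ComparisonIn.kernelPairMap_mem _ hfg₁ hcomp
  obtain ⟨-, -, -, -, hsplit⟩ := hII _ _ _ _ _ _ hk hg₁ (kernelPairMap_fst wg).symm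
    (diagonal_kernelPairMap wg) (pullback.diagonal_fst b) (pullback.diagonal_fst c)
  exact ⟨hg₁, hb, hc, mem_of_comp_mem hfg₀, (ComparisonIn.transpose hsplit).of_kernelPair wg hb⟩

end

/-- under (E1)–(E4), the conditions (i), (ii) and (iii) are
equivalent. -/
theorem stmt5 {C : Type*} [Category C] (E : MorphismProperty C)
    (hE1 : ∀ {X Y : C} (f : X ⟶ Y), IsIso f → E f)
    (hE2exists : ∀ {X Y Z : C} (f : X ⟶ Z) (g : Y ⟶ Z), E f → HasPullback g f)
    (hE2stable : ∀ {P X Y Z : C} (fst : P ⟶ X) (snd : P ⟶ Y) (f : X ⟶ Z) (g : Y ⟶ Z),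
      IsPullback fst snd f g → E g → E fst)
    (hE3 : ∀ {X Y Z : C} (f : X ⟶ Y) (g : Y ⟶ Z), E f → E g → E (f ≫ g))
    (hE4 : ∀ {X Y Z : C} (f : X ⟶ Y) (g : Y ⟶ Z), E (f ≫ g) → E g) :
    (CondI E ↔ CondII E) ∧ (CondII E ↔ CondIII E) := by
  have : E.ContainsIdentities := ⟨fun X ↦ hE1 (𝟙 X) inferInstance⟩
  have : E.HasOfPrecompProperty ⊤ := ⟨fun f g _ ↦ hE4 f g⟩
  have : E.IsStableUnderComposition := ⟨hE3⟩
  have : E.IsStableUnderBaseChange := ⟨fun sq ↦ hE2stable _ _ _ _ sq.flip⟩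
  have hpb {X Y : C} (f : X ⟶ Y) (hf : E f) : HasPullbacksAlong f := fun g ↦ hE2exists f g hf
  exact ⟨⟨condII_of_condI, condI_of_condII hpb⟩, ⟨condIII_of_condII, condII_of_condIII hpb⟩⟩
end

section
/- Let A be a category and E a class of morphisms satisfying (E1)–(E5). Then the pair (Ext A, E¹), where Ext A is the full subcategory of the arrow category on morphisms in E and E¹ is the class of double extensions, also satisfies (E1)–(E5). -/
/-!
Pullbacks in the arrow category are computed componentwise, and in a commutative cube whose
side faces are pullbacks the comparison morphism of the top face is a base change of that of the
bottom face (paste the pullback squares). This gives (E2) and (E3) for double extensions. For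
(E4), pulling `f ≫ g` back along `g` and using (E5) rewrites `f ≫ g` as `p₁ ≫ g` with `p₁` a
double extension, after which cancellation works as in `A`. For (E5), the comparison morphism of
the cube is the comparison morphism of the square formed by the comparison morphisms of the two
double extensions; this square and the two transposed faces of the cube are split epimorphisms of
extensions, so (E5) in `A` applies to them.
-/

open CategoryTheory CategoryTheory.Limits

/-- Given a class `F` of morphisms of a category `D`, `ext1 F` is the class of
*double extensions* in the arrow category: a morphism of arrows `f : a ⟶ b` lies in
`ext1 F` when `a`, `b` are `F`-extensions, both components of `f` are in `F`, the
pullback of `f.right` and `b` exists, and the comparison morphism to it is in `F`.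
Iterating `ext1` yields the classes of higher extensions. -/
def ext1 {D : Type*} [Category D] (F : MorphismProperty D) : MorphismProperty (Arrow D) :=
  fun a b f =>
    F a.hom ∧ F b.hom ∧ F f.left ∧ F f.right ∧
    ∃ (P : D) (pA : P ⟶ a.right) (pB : P ⟶ b.left) (c : a.left ⟶ P),
      IsPullback pA pB f.right b.hom ∧ c ≫ pA = a.hom ∧ c ≫ pB = f.left ∧ F c

namespace CategoryTheory.Arrow

universe v u

variable {D : Type u} [Category.{v} D]

lemma isPullback_of_isPullback_left_right {P a b c : Arrow D} {p₁ : P ⟶ a} {p₂ : P ⟶ b}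
    {h : a ⟶ c} {g : b ⟶ c} (hL : IsPullback p₁.left p₂.left h.left g.left)
    (hR : IsPullback p₁.right p₂.right h.right g.right) : IsPullback p₁ p₂ h g := by
  have w : p₁ ≫ h = p₂ ≫ g := Arrow.hom_ext _ _ hL.w hR.w
  exact .of_isLimit (c := PullbackCone.mk p₁ p₂ w) (Comma.fstSndJointlyReflectLimit
    ((isLimitMapConePullbackConeEquiv (Comma.fst _ _) w).symm hL.isLimit)
    ((isLimitMapConePullbackConeEquiv (Comma.snd _ _) w).symm hR.isLimit))

lemma exists_isPullback_left_right {a b c : Arrow D} (h : a ⟶ c) (g : b ⟶ c)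
    [HasPullback h.left g.left] [HasPullback h.right g.right] :
    ∃ (P : Arrow D) (p₁ : P ⟶ a) (p₂ : P ⟶ b),
      IsPullback p₁.left p₂.left h.left g.left ∧ IsPullback p₁.right p₂.right h.right g.right :=
  ⟨Arrow.mk (pullback.map _ _ _ _ a.hom b.hom c.hom (Arrow.w h) (Arrow.w g)),
    Arrow.homMk (pullback.fst _ _) (pullback.fst _ _) (pullback.lift_fst _ _ _).symm,
    Arrow.homMk (pullback.snd _ _) (pullback.snd _ _) (pullback.lift_snd _ _ _).symm,
    IsPullback.of_hasPullback _ _, IsPullback.of_hasPullback _ _⟩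

lemma w_left {A B : Arrow (Arrow D)} (F : A ⟶ B) :
    F.left.left ≫ B.hom.left = A.hom.left ≫ F.right.left :=
  congrArg Hom.left (Arrow.w F)

lemma w_right {A B : Arrow (Arrow D)} (F : A ⟶ B) :
    F.left.right ≫ B.hom.right = A.hom.right ≫ F.right.right :=
  congrArg Hom.right (Arrow.w F)

noncomputable def comparison {a b : Arrow D} (f : a ⟶ b) [HasPullback f.right b.hom] :
    a.left ⟶ pullback f.right b.hom :=
  pullback.lift a.hom f.left (Arrow.w f).symm

lemma comparison_fst {a b : Arrow D} (f : a ⟶ b) [HasPullback f.right b.hom] :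
    comparison f ≫ pullback.fst _ _ = a.hom :=
  pullback.lift_fst _ _ _

lemma comparison_snd {a b : Arrow D} (f : a ⟶ b) [HasPullback f.right b.hom] :
    comparison f ≫ pullback.snd _ _ = f.left :=
  pullback.lift_snd _ _ _

noncomputable def comparisonMap {A B : Arrow (Arrow D)} (F : A ⟶ B)
    [HasPullback A.hom.right A.right.hom] [HasPullback B.hom.right B.right.hom] :
    Arrow.mk (comparison A.hom) ⟶ Arrow.mk (comparison B.hom) :=
  Arrow.homMk' F.left.left
    (pullback.map _ _ _ _ F.left.right F.right.left F.right.right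
      (w_right F).symm (Arrow.w F.right).symm)
    (by
      apply pullback.hom_ext
      · simp only [comparison, Category.assoc, pullback.lift_fst, pullback.lift_fst_assoc]
        exact Arrow.w F.left
      · simp only [comparison, Category.assoc, pullback.lift_snd, pullback.lift_snd_assoc]
        exact w_left F)

lemma comparisonMap_comp {A B C : Arrow (Arrow D)} (F : A ⟶ B) (G : B ⟶ C)
    [HasPullback A.hom.right A.right.hom] [HasPullback B.hom.right B.right.hom]
    [HasPullback C.hom.right C.right.hom] :
    comparisonMap (F ≫ G) = comparisonMap F ≫ comparisonMap G :=
  Arrow.hom_ext _ _ rfl (pullback.map_comp _ _ _ _ _ _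
    (w_right F).symm (Arrow.w F.right).symm (w_right G).symm (Arrow.w G.right).symm).symm

lemma comparisonMap_id (A : Arrow (Arrow D)) [HasPullback A.hom.right A.right.hom] :
    comparisonMap (𝟙 A) = 𝟙 _ :=
  Arrow.hom_ext _ _ rfl pullback.map_id

/-- `PA` and `PB` are the targets of the comparison morphisms of `A.hom` and `B.hom`, and `bc` is
the comparison morphism of `B.hom`. -/
lemma exists_isPullback_of_cube {A B : Arrow (Arrow D)} (F : A ⟶ B) {P : Arrow D} {p₁ : P ⟶ B.left}
    {p₂ : P ⟶ A.right} (hL : IsPullback p₁.left p₂.left B.hom.left F.right.left)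
    (hR : IsPullback p₁.right p₂.right B.hom.right F.right.right) {c : A.left ⟶ P}
    (hc₁ : c ≫ p₁ = F.left) (hc₂ : c ≫ p₂ = A.hom)
    {PA : D} {aA : PA ⟶ A.left.right} {aB : PA ⟶ A.right.left}
    (hPA : IsPullback aA aB A.hom.right A.right.hom)
    {PB : D} {bA : PB ⟶ B.left.right} {bB : PB ⟶ B.right.left}
    (hPB : IsPullback bA bB B.hom.right B.right.hom)
    {φ : PA ⟶ PB} (hφA : φ ≫ bA = aA ≫ F.left.right) (hφB : φ ≫ bB = aB ≫ F.right.left)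
    {bc : B.left.left ⟶ PB} (hbcA : bc ≫ bA = B.left.hom) (hbcB : bc ≫ bB = B.hom.left)
    {Q : D} {qA : Q ⟶ PA} {qB : Q ⟶ B.left.left} (hQ : IsPullback qA qB φ bc)
    [HasPullback p₂.right A.right.hom] :
    ∃ v : Q ⟶ P.left, v ≫ p₁.left = qB ∧ v ≫ p₂.left = qA ≫ aB ∧
      IsPullback (qA ≫ aA) v c.right P.hom := by
  obtain ⟨v, hvA, hvB⟩ := hL.exists_lift qB (qA ≫ aB) (by
    rw [← hbcB, ← reassoc_of% hQ.w, hφB, Category.assoc])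
  refine ⟨v, hvA, hvB, ?_⟩
  -- The pullback of `A.right.hom` along `p₂.right` is also one of `bB` along `F.right.left`
  -- (`hσ`); `Q` and the pullback of `P.hom` along `c.right` are both pasted from it.
  have hc₁r : c.right ≫ p₁.right = F.left.right := congrArg Arrow.Hom.right hc₁
  have hc₂r : c.right ≫ p₂.right = A.hom.right := congrArg Arrow.Hom.right hc₂
  have hRA := IsPullback.of_hasPullback p₂.right A.right.hom
  obtain ⟨κ, hκA, hκB, hκ⟩ : ∃ κ, κ ≫ pullback.fst _ _ = aA ≫ c.right ∧
      κ ≫ pullback.snd _ _ = aB ∧ IsPullback κ aA (pullback.fst _ _) c.right :=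
    ⟨_, hRA.flip.lift_snd _ _ _, hRA.flip.lift_fst _ _ _, .of_right' (hc₂r ▸ hPA.flip) hRA.flip⟩
  obtain ⟨σ, hσA, hσB, hσ⟩ : ∃ σ, σ ≫ bA = pullback.fst _ _ ≫ p₁.right ∧
      σ ≫ bB = pullback.snd _ _ ≫ F.right.left ∧ IsPullback σ (pullback.snd _ _) bB F.right.left :=
    ⟨_, hPB.lift_fst _ _ _, hPB.lift_snd _ _ _,
      .of_right' (Arrow.w F.right ▸ hRA.paste_horiz hR) hPB⟩
  obtain ⟨ℓ, hℓA, hℓB⟩ := hRA.exists_lift P.hom p₂.left (Arrow.w p₂).symm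
  have hℓ : IsPullback p₁.left ℓ bc σ := by
    refine .of_bot (by rwa [hℓB, hbcB]) ?_ hσ
    apply hPB.hom_ext
    · simp [hbcA, hσA, reassoc_of% hℓA]
    · simp [hbcB, hσB, reassoc_of% hℓB, hL.w]
  have hκσ : κ ≫ σ = φ := hPB.hom_ext (by simp [hσA, hφA, reassoc_of% hκA, hc₁r])
    (by simp [hσB, hφB, reassoc_of% hκB])
  have hw : v ≫ P.hom = (qA ≫ aA) ≫ c.right := by
    apply hR.hom_ext
    · simp only [Category.assoc]
      rw [hc₁r, ← Arrow.w p₁, reassoc_of% hvA, ← hbcA, ← reassoc_of% hQ.w, hφA]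
    · simp only [Category.assoc]
      rw [hc₂r, ← Arrow.w p₂, reassoc_of% hvB, ← hPA.w]
  have hvℓ : v ≫ ℓ = qA ≫ κ :=
    hRA.hom_ext (by simp [hℓA, hκA, hw]) (by simp [hℓB, hκB, hvB])
  have hv : IsPullback v qA ℓ κ := .of_right (by rw [hvA, hκσ]; exact hQ.flip) hvℓ hℓ
  exact (hℓA ▸ hv.paste_vert hκ).flip

end CategoryTheory.Arrow

section DoubleExtensions

variable {D : Type*} [Category D] {E : MorphismProperty D}

open MorphismProperty

lemma ext1_iff_of_isPullback [E.RespectsIso] {a b : Arrow D} {f : a ⟶ b} {P : D}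
    {pA : P ⟶ a.right} {pB : P ⟶ b.left} (hP : IsPullback pA pB f.right b.hom)
    {c : a.left ⟶ P} (hcA : c ≫ pA = a.hom) (hcB : c ≫ pB = f.left) :
    ext1 E f ↔ E a.hom ∧ E b.hom ∧ E f.left ∧ E f.right ∧ E c := by
  refine ⟨fun ⟨ha, hb, hl, hr, P', pA', pB', c', hP', hcA', hcB', hc'⟩ => ⟨ha, hb, hl, hr, ?_⟩,
    fun ⟨ha, hb, hl, hr, hc⟩ => ⟨ha, hb, hl, hr, P, pA, pB, c, hP, hcA, hcB, hc⟩⟩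
  have : c = c' ≫ (hP'.isoIsPullback _ _ hP).hom :=
    hP.hom_ext (by simp [hcA, hcA']) (by simp [hcB, hcB'])
  exact this ▸ RespectsIso.postcomp E _ _ hc'

lemma ext1_iff_comparison [E.RespectsIso] {a b : Arrow D} (f : a ⟶ b)
    [HasPullback f.right b.hom] :
    ext1 E f ↔ E a.hom ∧ E b.hom ∧ E f.left ∧ E f.right ∧ E (Arrow.comparison f) :=
  ext1_iff_of_isPullback (.of_hasPullback _ _) (Arrow.comparison_fst f) (Arrow.comparison_snd f)

lemma ext1_fst_of_isPullback_left_right [E.IsStableUnderBaseChange] [E.IsStableUnderComposition]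
    (hpb : ∀ {X Y Z : D} (f : X ⟶ Z) (g : Y ⟶ Z), E g → HasPullback f g)
    {P a b c : Arrow D} {p₁ : P ⟶ a} {p₂ : P ⟶ b} {h : a ⟶ c} {g : b ⟶ c}
    (ha : E a.hom) (hg : ext1 E g) (hL : IsPullback p₁.left p₂.left h.left g.left)
    (hR : IsPullback p₁.right p₂.right h.right g.right) : ext1 E p₁ := by
  obtain ⟨-, -, hgl, hgr, Pg, gA, gB, q, hPg, hqA, hqB, hq⟩ := hg
  have := hpb p₁.right a.hom ha
  have hQ := IsPullback.of_hasPullback p₁.right a.hom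
  obtain ⟨k, hk₁, hk₂⟩ := hQ.exists_lift P.hom p₁.left (Arrow.w p₁).symm
  obtain ⟨u, hu, hQPg⟩ : ∃ u, u ≫ gA = pullback.fst _ _ ≫ p₂.right ∧
      IsPullback u (pullback.snd _ _) gB h.left :=
    ⟨_, hPg.lift_fst _ _ _, .of_right' (Arrow.w h ▸ hQ.paste_horiz hR.flip) hPg⟩
  -- the comparison `k` of `p₁` is a base change of the comparison `q` of `g`
  have hk : IsPullback p₂.left k q u := by
    refine .of_bot (by simpa [hk₂, hqB] using hL.flip) ?_ hQPg
    apply hPg.hom_ext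
    · simp [hqA, hu, reassoc_of% hk₁]
    · simp [hqB, hQPg.w, reassoc_of% hk₂, hL.w]
  rw [ext1_iff_of_isPullback hQ hk₁ hk₂]
  refine ⟨?_, ha, of_isPullback hL.flip hgl, of_isPullback hR.flip hgr, of_isPullback hk hq⟩
  exact hk₁ ▸ E.comp_mem _ _ (of_isPullback hk hq) (of_isPullback hQ.flip ha)

lemma exists_isPullback_left_right_of_ext1
    (hpb : ∀ {X Y Z : D} (f : X ⟶ Z) (g : Y ⟶ Z), E g → HasPullback f g)
    {a b c : Arrow D} {g : b ⟶ c} (hg : ext1 E g) (h : a ⟶ c) :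
    ∃ (P : Arrow D) (p₁ : P ⟶ a) (p₂ : P ⟶ b),
      IsPullback p₁.left p₂.left h.left g.left ∧ IsPullback p₁.right p₂.right h.right g.right :=
  have := hpb h.left g.left hg.2.2.1
  have := hpb h.right g.right hg.2.2.2.1
  Arrow.exists_isPullback_left_right h g

lemma exists_isPullback_ext1_fst [E.IsStableUnderBaseChange] [E.IsStableUnderComposition]
    (hpb : ∀ {X Y Z : D} (f : X ⟶ Z) (g : Y ⟶ Z), E g → HasPullback f g)
    {a b c : Arrow D} (g : b ⟶ c) (h : a ⟶ c) (ha : E a.hom) (hg : ext1 E g) :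
    ∃ (P : Arrow D) (p₁ : P ⟶ a) (p₂ : P ⟶ b),
      IsPullback p₁ p₂ h g ∧ E P.hom ∧ ext1 E p₁ := by
  obtain ⟨P, p₁, p₂, hL, hR⟩ := exists_isPullback_left_right_of_ext1 hpb hg h
  have hp₁ := ext1_fst_of_isPullback_left_right hpb ha hg hL hR
  exact ⟨P, p₁, p₂, Arrow.isPullback_of_isPullback_left_right hL hR, hp₁.1, hp₁⟩

lemma ext1_comp [E.IsStableUnderBaseChange] [E.IsStableUnderComposition]
    (hpb : ∀ {X Y Z : D} (f : X ⟶ Z) (g : Y ⟶ Z), E g → HasPullback f g)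
    {a b c : Arrow D} {f : a ⟶ b} {g : b ⟶ c} (hf : ext1 E f) (hg : ext1 E g) :
    ext1 E (f ≫ g) := by
  obtain ⟨ha, -, hfl, hfr, Pf, fA, fB, cf, hPf, hcfA, hcfB, hcf⟩ := hf
  obtain ⟨-, hc, hgl, hgr, Pg, gA, gB, q, hPg, hqA, hqB, hq⟩ := hg
  have := hpb (f.right ≫ g.right) c.hom hc
  have hP := IsPullback.of_hasPullback (f.right ≫ g.right) c.hom
  obtain ⟨w, hwB, hw⟩ : ∃ w, w ≫ gB = pullback.snd _ _ ∧
      IsPullback w (pullback.fst _ _) gA f.right :=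
    ⟨_, hPg.flip.lift_fst _ _ _, .of_right' hP.flip hPg.flip⟩
  -- the comparison morphism of `f ≫ g` is `cf ≫ m`, with `m` a base change of that of `g`
  obtain ⟨m, hmA, hm⟩ : ∃ m, m ≫ pullback.fst _ _ = fA ∧ IsPullback fB m q w :=
    ⟨_, hw.lift_snd _ _ _, .of_bot' (hqA ▸ hPf.flip) hw⟩
  have hmB : m ≫ pullback.snd _ _ = fB ≫ g.left := by rw [← hwB, ← reassoc_of% hm.w, hqB]
  rw [ext1_iff_of_isPullback (f := f ≫ g) hP (c := cf ≫ m) (by rw [Category.assoc, hmA, hcfA])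
    (by rw [Category.assoc, hmB, reassoc_of% hcfB]; rfl)]
  exact ⟨ha, hc, E.comp_mem _ _ hfl hgl, E.comp_mem _ _ hfr hgr,
    E.comp_mem _ _ hcf (of_isPullback hm hq)⟩

lemma ext1_of_ext1_comp_of_mem_right [E.IsStableUnderBaseChange] [E.IsStableUnderComposition]
    (hpb : ∀ {X Y Z : D} (f : X ⟶ Z) (g : Y ⟶ Z), E g → HasPullback f g)
    (hE4 : ∀ {X Y Z : D} (f : X ⟶ Y) (g : Y ⟶ Z), E (f ≫ g) → E g)
    {a b c : Arrow D} {f : a ⟶ b} {g : b ⟶ c} (hfr : E f.right) (hb : E b.hom)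
    (hfg : ext1 E (f ≫ g)) : ext1 E g := by
  obtain ⟨-, hc, hfgl, hfgr, P, pA, pB, cfg, hP, hcA, hcB, hcfg⟩ := hfg
  have := hpb g.right c.hom hc
  have hPg := IsPullback.of_hasPullback g.right c.hom
  obtain ⟨q, hqA, hqB⟩ := hPg.exists_lift b.hom g.left (Arrow.w g).symm
  obtain ⟨w, hwB, hw⟩ : ∃ w, w ≫ pullback.snd _ _ = pB ∧
      IsPullback w pA (pullback.fst _ _) f.right :=
    ⟨_, hPg.flip.lift_fst _ _ _, .of_right' hP.flip hPg.flip⟩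
  have hfq : f.left ≫ q = cfg ≫ w := by
    apply hPg.hom_ext
    · rw [Category.assoc, hqA, Category.assoc, hw.w, reassoc_of% hcA, Arrow.w f]
    · rw [Category.assoc, hqB, Category.assoc, hwB, hcB]; rfl
  rw [ext1_iff_of_isPullback hPg hqA hqB]
  refine ⟨hb, hc, hE4 _ _ hfgl, hE4 _ _ hfgr, hE4 f.left q ?_⟩
  exact hfq ▸ E.comp_mem _ _ hcfg (of_isPullback hw.flip hfr)

lemma ext1_of_ext1_comp [E.IsStableUnderBaseChange] [E.IsStableUnderComposition]
    (hpb : ∀ {X Y Z : D} (f : X ⟶ Z) (g : Y ⟶ Z), E g → HasPullback f g)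
    (hE4 : ∀ {X Y Z : D} (f : X ⟶ Y) (g : Y ⟶ Z), E (f ≫ g) → E g)
    (hE5 : ∀ {a b : Arrow D} (f : a ⟶ b) (s : b ⟶ a), E a.hom → E b.hom →
      s ≫ f = 𝟙 b → ext1 E f)
    {a b c : Arrow D} {f : a ⟶ b} {g : b ⟶ c} (hb : E b.hom) (hfg : ext1 E (f ≫ g)) :
    ext1 E g := by
  obtain ⟨P, p₁, p₂, hL, hR⟩ := exists_isPullback_left_right_of_ext1 hpb hfg g
  have hp₁ : ext1 E p₁ := ext1_fst_of_isPullback_left_right hpb hb hfg hL hR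
  have hP := Arrow.isPullback_of_isPullback_left_right hL hR
  obtain ⟨s, -, hs⟩ := hP.exists_lift f (𝟙 a) (Category.id_comp _).symm
  have hp₂ : ext1 E p₂ := hE5 p₂ s hp₁.1 hfg.1 hs
  have hp₁g : ext1 E (p₁ ≫ g) := hP.w ▸ ext1_comp hpb hp₂ hfg
  exact ext1_of_ext1_comp_of_mem_right hpb hE4 hp₁.2.2.2.1 hb hp₁g

lemma map_mem_of_split [E.RespectsIso]
    (hE5 : ∀ {a b : Arrow D} (f : a ⟶ b) (s : b ⟶ a), E a.hom → E b.hom →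
      s ≫ f = 𝟙 b → ext1 E f)
    {X : Type*} [Category X] (G : X ⥤ D) {A B : Arrow X} (F : A ⟶ B) (S : B ⟶ A)
    (hSF : S ≫ F = 𝟙 B) (hA : E (G.map A.hom)) (hB : E (G.map B.hom))
    {P : X} {p₁ : P ⟶ B.left} {p₂ : P ⟶ A.right}
    (hP : IsPullback (G.map p₁) (G.map p₂) (G.map B.hom) (G.map F.right))
    {c : A.left ⟶ P} (hc₁ : c ≫ p₁ = F.left) (hc₂ : c ≫ p₂ = A.hom) : E (G.map c) := by
  have hGF : ext1 E (G.mapArrow.map F) :=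
    hE5 _ (G.mapArrow.map S) hA hB (by rw [← Functor.map_comp, hSF, CategoryTheory.Functor.map_id])
  rw [ext1_iff_of_isPullback (f := G.mapArrow.map F) hP.flip
    ((G.map_comp _ _).symm.trans (congrArg G.map hc₂))
    ((G.map_comp _ _).symm.trans (congrArg G.map hc₁))] at hGF
  exact hGF.2.2.2.2

lemma ext1_of_split_of_isPullback [E.RespectsIso]
    (hpb : ∀ {X Y Z : D} (f : X ⟶ Z) (g : Y ⟶ Z), E g → HasPullback f g)
    (hE5 : ∀ {a b : Arrow D} (f : a ⟶ b) (s : b ⟶ a), E a.hom → E b.hom →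
      s ≫ f = 𝟙 b → ext1 E f)
    {A B : Arrow (Arrow D)} (F : A ⟶ B) (S : B ⟶ A) (hSF : S ≫ F = 𝟙 B)
    (hA : ext1 E A.hom) (hB : ext1 E B.hom) {P : Arrow D} {p₁ : P ⟶ B.left} {p₂ : P ⟶ A.right}
    (hL : IsPullback p₁.left p₂.left B.hom.left F.right.left)
    (hR : IsPullback p₁.right p₂.right B.hom.right F.right.right) (hP : E P.hom)
    {c : A.left ⟶ P} (hc₁ : c ≫ p₁ = F.left) (hc₂ : c ≫ p₂ = A.hom) : ext1 E c := by
  have := hpb A.hom.right A.right.hom hA.2.1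
  have := hpb B.hom.right B.right.hom hB.2.1
  have := hpb p₂.right A.right.hom hA.2.1
  have hac : E (Arrow.comparison A.hom) := ((ext1_iff_comparison A.hom).1 hA).2.2.2.2
  have hbc : E (Arrow.comparison B.hom) := ((ext1_iff_comparison B.hom).1 hB).2.2.2.2
  have hsplit : Arrow.comparisonMap S ≫ Arrow.comparisonMap F = 𝟙 _ := by
    rw [← Arrow.comparisonMap_comp, hSF, Arrow.comparisonMap_id]
  have : HasPullback (Arrow.comparisonMap F).right
      (CategoryTheory.Arrow.mk (Arrow.comparison B.hom)).hom :=
    hpb _ _ hbc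
  have hd : E (Arrow.comparison (Arrow.comparisonMap F)) :=
    ((ext1_iff_comparison _).1 (hE5 _ _ hac hbc hsplit)).2.2.2.2
  obtain ⟨v, hvA, hvB, hcube⟩ := Arrow.exists_isPullback_of_cube F hL hR hc₁ hc₂
    (.of_hasPullback _ _) (.of_hasPullback _ _) (φ := (Arrow.comparisonMap F).right)
    (bc := (CategoryTheory.Arrow.mk (Arrow.comparison B.hom)).hom)
    (pullback.lift_fst _ _ _) (pullback.lift_snd _ _ _)
    (Arrow.comparison_fst B.hom) (Arrow.comparison_snd B.hom) (.of_hasPullback _ _)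
  have hdA := Arrow.comparison_fst (Arrow.comparisonMap F)
  have hdB := Arrow.comparison_snd (Arrow.comparisonMap F)
  have hcl₁ : c.left ≫ p₁.left = F.left.left := congrArg Arrow.Hom.left hc₁
  have hcl₂ : c.left ≫ p₂.left = A.hom.left := congrArg Arrow.Hom.left hc₂
  rw [ext1_iff_of_isPullback hcube (c := Arrow.comparison (Arrow.comparisonMap F))
    (by rw [reassoc_of% hdA]; exact Arrow.comparison_fst A.hom)
    (hL.hom_ext (by rw [Category.assoc, hvA, hdB, hcl₁]; rfl)
      (by rw [Category.assoc, hvB, reassoc_of% hdA, hcl₂]; exact Arrow.comparison_snd A.hom))]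
  exact ⟨hA.1, hP, map_mem_of_split hE5 Arrow.leftFunc F S hSF hA.2.2.1 hB.2.2.1 hL hc₁ hc₂,
    map_mem_of_split hE5 Arrow.rightFunc F S hSF hA.2.2.2.1 hB.2.2.2.1 hR hc₁ hc₂, hd⟩

lemma ext1_ext1_of_split [E.IsStableUnderBaseChange] [E.IsStableUnderComposition]
    (hpb : ∀ {X Y Z : D} (f : X ⟶ Z) (g : Y ⟶ Z), E g → HasPullback f g)
    (hE5 : ∀ {a b : Arrow D} (f : a ⟶ b) (s : b ⟶ a), E a.hom → E b.hom →
      s ≫ f = 𝟙 b → ext1 E f)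
    {A B : Arrow (Arrow D)} (F : A ⟶ B) (S : B ⟶ A) (hA : ext1 E A.hom) (hB : ext1 E B.hom)
    (hSF : S ≫ F = 𝟙 B) : ext1 (ext1 E) F := by
  have hFl : ext1 E F.left := hE5 F.left S.left hA.1 hB.1 (congrArg Arrow.Hom.left hSF)
  have hFr : ext1 E F.right := hE5 F.right S.right hA.2.1 hB.2.1 (congrArg Arrow.Hom.right hSF)
  obtain ⟨P, p₁, p₂, hL, hR⟩ := exists_isPullback_left_right_of_ext1 hpb hFr B.hom
  have hP := (Arrow.isPullback_of_isPullback_left_right hL hR).flip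
  obtain ⟨c, hc₂, hc₁⟩ := hP.exists_lift A.hom F.left (Arrow.w F).symm
  have hp₁ : ext1 E p₁ := ext1_fst_of_isPullback_left_right hpb hB.1 hFr hL hR
  exact ⟨hA, hB, hFl, hFr, P, p₂, p₁, c, hP, hc₂, hc₁,
    ext1_of_split_of_isPullback hpb hE5 F S hSF hA hB hL hR hp₁.1 hc₁ hc₂⟩

end DoubleExtensions

/-- if `(A, E)` satisfies (E1)–(E5) then `(Ext A, E¹)` — the
extensions (arrows with `E`-hom) together with the double extensions — again
satisfies (E1)–(E5): isomorphisms of extensions are double extensions, pullbacks of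
double extensions exist in `Ext A` (degreewise) and are double extensions, double
extensions compose, satisfy right cancellation among extensions, and every split
epimorphism of double extensions is a two-fold double extension. -/
theorem stmt6 {C : Type*} [Category C] (E : MorphismProperty C)
    (hE1 : ∀ {X Y : C} (f : X ⟶ Y), IsIso f → E f)
    (hE2 : ∀ {X Y Z : C} (g : Y ⟶ Z) (h : X ⟶ Z), E g →
      ∃ (P : C) (p₁ : P ⟶ X) (p₂ : P ⟶ Y), IsPullback p₁ p₂ h g ∧ E p₁)
    (hE3 : ∀ {X Y Z : C} (f : X ⟶ Y) (g : Y ⟶ Z), E f → E g → E (f ≫ g))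
    (hE4 : ∀ {X Y Z : C} (f : X ⟶ Y) (g : Y ⟶ Z), E (f ≫ g) → E g)
    (hE5 : ∀ {a b : Arrow C} (f : a ⟶ b) (s : b ⟶ a), E a.hom → E b.hom →
      s ≫ f = 𝟙 b → ext1 E f) :
    -- (E1) for (Ext A, E¹)
    (∀ {a b : Arrow C} (f : a ⟶ b), E a.hom → E b.hom → IsIso f → ext1 E f) ∧
    -- (E2) for (Ext A, E¹): pullbacks of double extensions exist in Ext A and are
    -- double extensions
    (∀ {a b c : Arrow C} (g : b ⟶ c) (h : a ⟶ c), E a.hom → ext1 E g →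
      ∃ (P : Arrow C) (p₁ : P ⟶ a) (p₂ : P ⟶ b),
        IsPullback p₁ p₂ h g ∧ E P.hom ∧ ext1 E p₁) ∧
    -- (E3) for (Ext A, E¹)
    (∀ {a b c : Arrow C} (f : a ⟶ b) (g : b ⟶ c),
      ext1 E f → ext1 E g → ext1 E (f ≫ g)) ∧
    -- (E4) for (Ext A, E¹)
    (∀ {a b c : Arrow C} (f : a ⟶ b) (g : b ⟶ c), E b.hom →
      ext1 E (f ≫ g) → ext1 E g) ∧
    -- (E5) for (Ext A, E¹)
    (∀ {A B : Arrow (Arrow C)} (F : A ⟶ B) (S : B ⟶ A),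
      ext1 E A.hom → ext1 E B.hom → S ≫ F = 𝟙 B → ext1 (ext1 E) F) := by
  have : E.IsStableUnderComposition := ⟨hE3⟩
  have : E.RespectsIso :=
    { precomp e he f hf := hE3 e f (hE1 e he) hf
      postcomp e he f hf := hE3 f e hf (hE1 e he) }
  have : E.IsStableUnderBaseChange := .of_forall_exists_isPullback fun f g _ hg => hE2 g f hg
  have hpb {X Y Z : C} (f : X ⟶ Z) (g : Y ⟶ Z) (hg : E g) : HasPullback f g :=
    have ⟨_, _, _, hP, _⟩ := hE2 g f hg; hP.hasPullback
  exact ⟨fun f ha hb _ => hE5 f (inv f) ha hb (IsIso.inv_hom_id f),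
    exists_isPullback_ext1_fst hpb, fun _ _ => ext1_comp hpb,
    fun _ _ => ext1_of_ext1_comp hpb hE4 hE5, ext1_ext1_of_split hpb hE5⟩
end

section
/- Let A be a finitely complete category satisfying: every split epimorphism of split epimorphisms (a commutative square of split epimorphisms in both directions, with compatible splittings) has the property that the comparison morphism to the pullback is a strong epimorphism. If moreover A has pushouts of split monomorphisms, then A is weakly Mal'tsev: in any pullback square of split epimorphisms, the two induced splittings into the pullback object are jointly epimorphic. -/
/-!
Glue the two splittings `s₀ : B₀ ⟶ A₀` and `tb : B₀ ⟶ B₁` along `B₀` into the pushout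
`D = A₀ ⊔_{B₀} B₁`. The identities and the composites `b ≫ s₀`, `f₀ ≫ tb` induce retractions
`D ⟶ A₀` and `D ⟶ B₁`, which make `D` a split epimorphism of split epimorphisms over the given
pullback square; by (E5) its comparison map `D ⟶ P` is a strong epimorphism. That comparison map
is the copairing of the two splittings `j₁, j₂` into `P`, so they are jointly epimorphic.
-/

open CategoryTheory CategoryTheory.Limits

section

variable {C : Type*} [Category C]

theorem eq_of_epi_pushout_desc {X Y Z W Q : C} {f : X ⟶ Y} {g : X ⟶ Z} [HasPushout f g]
    {h : Y ⟶ W} {k : Z ⟶ W} (w : f ≫ h = g ≫ k) [Epi (pushout.desc h k w)]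
    {u v : W ⟶ Q} (hu : h ≫ u = h ≫ v) (hv : k ≫ u = k ≫ v) : u = v :=
  (cancel_epi (pushout.desc h k w)).mp <|
    pushout.hom_ext (by simp only [pushout.inl_desc_assoc, hu])
      (by simp only [pushout.inr_desc_assoc, hv])

section PushoutOfSplittings

variable {A₀ B₁ B₀ : C} {f₀ : A₀ ⟶ B₀} {b : B₁ ⟶ B₀} {s₀ : B₀ ⟶ A₀} {tb : B₀ ⟶ B₁}
  [HasPushout s₀ tb]

noncomputable def pushoutSplittingsFst (htb : tb ≫ b = 𝟙 B₀) : pushout s₀ tb ⟶ A₀ :=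
  pushout.desc (𝟙 A₀) (b ≫ s₀) (by rw [Category.comp_id, reassoc_of% htb])

noncomputable def pushoutSplittingsSnd (hs₀ : s₀ ≫ f₀ = 𝟙 B₀) : pushout s₀ tb ⟶ B₁ :=
  pushout.desc (f₀ ≫ tb) (𝟙 B₁) (by rw [Category.comp_id, reassoc_of% hs₀])

variable (hs₀ : s₀ ≫ f₀ = 𝟙 B₀) (htb : tb ≫ b = 𝟙 B₀)

@[simp]
theorem inl_pushoutSplittingsFst : pushout.inl s₀ tb ≫ pushoutSplittingsFst htb = 𝟙 A₀ :=
  pushout.inl_desc _ _ _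

@[simp]
theorem inr_pushoutSplittingsFst : pushout.inr s₀ tb ≫ pushoutSplittingsFst htb = b ≫ s₀ :=
  pushout.inr_desc _ _ _

@[simp]
theorem inl_pushoutSplittingsSnd : pushout.inl s₀ tb ≫ pushoutSplittingsSnd hs₀ = f₀ ≫ tb :=
  pushout.inl_desc _ _ _

@[simp]
theorem inr_pushoutSplittingsSnd : pushout.inr s₀ tb ≫ pushoutSplittingsSnd hs₀ = 𝟙 B₁ :=
  pushout.inr_desc _ _ _

theorem pushoutSplittingsSnd_comp :
    pushoutSplittingsSnd hs₀ ≫ b = pushoutSplittingsFst htb ≫ f₀ :=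
  pushout.hom_ext
    (by simp only [← Category.assoc, inl_pushoutSplittingsSnd, inl_pushoutSplittingsFst]
        simp [htb])
    (by simp only [← Category.assoc, inr_pushoutSplittingsSnd, inr_pushoutSplittingsFst]
        simp [hs₀])

end PushoutOfSplittings

section SplittingsIntoPullback

variable {A₀ B₁ B₀ P : C} {f₀ : A₀ ⟶ B₀} {b : B₁ ⟶ B₀} {s₀ : B₀ ⟶ A₀} {tb : B₀ ⟶ B₁}
  {pA : P ⟶ A₀} {pB : P ⟶ B₁} {j₁ : A₀ ⟶ P} {j₂ : B₁ ⟶ P}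

theorem CategoryTheory.IsPullback.comp_splittings_eq (hP : IsPullback pA pB f₀ b)
    (hs₀ : s₀ ≫ f₀ = 𝟙 B₀) (htb : tb ≫ b = 𝟙 B₀)
    (hj₁A : j₁ ≫ pA = 𝟙 A₀) (hj₁B : j₁ ≫ pB = f₀ ≫ tb)
    (hj₂A : j₂ ≫ pA = b ≫ s₀) (hj₂B : j₂ ≫ pB = 𝟙 B₁) :
    s₀ ≫ j₁ = tb ≫ j₂ :=
  hP.hom_ext (by simp [hj₁A, hj₂A, reassoc_of% htb]) (by simp [hj₁B, hj₂B, reassoc_of% hs₀])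

theorem CategoryTheory.IsPullback.pushout_desc_splittings_comp_isoPullback_hom
    [HasPushout s₀ tb] [HasPullback f₀ b] (hP : IsPullback pA pB f₀ b)
    (hs₀ : s₀ ≫ f₀ = 𝟙 B₀) (htb : tb ≫ b = 𝟙 B₀)
    (hj₁A : j₁ ≫ pA = 𝟙 A₀) (hj₁B : j₁ ≫ pB = f₀ ≫ tb)
    (hj₂A : j₂ ≫ pA = b ≫ s₀) (hj₂B : j₂ ≫ pB = 𝟙 B₁) :
    pushout.desc j₁ j₂ (hP.comp_splittings_eq hs₀ htb hj₁A hj₁B hj₂A hj₂B) ≫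
        hP.isoPullback.hom =
      pullback.lift (pushoutSplittingsFst htb) (pushoutSplittingsSnd hs₀)
        (pushoutSplittingsSnd_comp hs₀ htb).symm := by
  apply pullback.hom_ext <;> apply pushout.hom_ext <;>
    simp only [Category.assoc, hP.isoPullback_hom_fst, hP.isoPullback_hom_snd, pullback.lift_fst,
      pullback.lift_snd, pushout.inl_desc_assoc, pushout.inr_desc_assoc, hj₁A, hj₁B, hj₂A, hj₂B,
      inl_pushoutSplittingsFst, inr_pushoutSplittingsFst, inl_pushoutSplittingsSnd,
      inr_pushoutSplittingsSnd]

end SplittingsIntoPullback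

end

/-- Let `A` be finitely complete such that for every split epimorphism
of split epimorphisms the comparison morphism to the pullback is a strong
epimorphism. If `A` has pushouts of split monomorphisms, then `A` is weakly
Mal'tsev: in any pullback of a cospan of split epimorphisms, the two induced
splittings into the pullback object are jointly epimorphic. -/
theorem stmt7 {C : Type*} [Category C] [HasFiniteLimits C]
    (hpush : ∀ {X Y Z : C} (f : X ⟶ Y) (g : X ⟶ Z),
      IsSplitMono f → IsSplitMono g → HasPushout f g)
    (hE5 : ∀ {A₁ A₀ B₁ B₀ : C} (a : A₁ ⟶ A₀) (b : B₁ ⟶ B₀)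
      (f₁ : A₁ ⟶ B₁) (f₀ : A₀ ⟶ B₀)
      (ta : A₀ ⟶ A₁) (tb : B₀ ⟶ B₁) (s₁ : B₁ ⟶ A₁) (s₀ : B₀ ⟶ A₀)
      (w : f₁ ≫ b = a ≫ f₀),
      s₁ ≫ a = b ≫ s₀ → ta ≫ f₁ = f₀ ≫ tb → s₀ ≫ ta = tb ≫ s₁ →
      s₁ ≫ f₁ = 𝟙 B₁ → s₀ ≫ f₀ = 𝟙 B₀ → ta ≫ a = 𝟙 A₀ → tb ≫ b = 𝟙 B₀ →
      StrongEpi (pullback.lift a f₁ w.symm : A₁ ⟶ pullback f₀ b))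
    -- a pullback of split epimorphisms:
    {A₀ B₁ B₀ : C} (f₀ : A₀ ⟶ B₀) (b : B₁ ⟶ B₀)
    (s₀ : B₀ ⟶ A₀) (tb : B₀ ⟶ B₁) (hs₀ : s₀ ≫ f₀ = 𝟙 B₀) (htb : tb ≫ b = 𝟙 B₀)
    {P : C} (pA : P ⟶ A₀) (pB : P ⟶ B₁) (hP : IsPullback pA pB f₀ b)
    -- the two induced splittings into the pullback:
    (j₁ : A₀ ⟶ P) (hj₁A : j₁ ≫ pA = 𝟙 A₀) (hj₁B : j₁ ≫ pB = f₀ ≫ tb)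
    (j₂ : B₁ ⟶ P) (hj₂A : j₂ ≫ pA = b ≫ s₀) (hj₂B : j₂ ≫ pB = 𝟙 B₁)
    -- jointly epimorphic:
    {Q : C} (u v : P ⟶ Q) (h₁ : j₁ ≫ u = j₁ ≫ v) (h₂ : j₂ ≫ u = j₂ ≫ v) :
    u = v := by
  have : HasPushout s₀ tb := hpush s₀ tb ⟨⟨f₀, hs₀⟩⟩ ⟨⟨b, htb⟩⟩
  have : StrongEpi (pullback.lift (pushoutSplittingsFst htb) (pushoutSplittingsSnd hs₀)
      (pushoutSplittingsSnd_comp hs₀ htb).symm) :=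
    hE5 _ _ _ _ (pushout.inl s₀ tb) tb (pushout.inr s₀ tb) s₀ (pushoutSplittingsSnd_comp hs₀ htb)
      (inr_pushoutSplittingsFst htb) (inl_pushoutSplittingsSnd hs₀) pushout.condition
      (inr_pushoutSplittingsSnd hs₀) hs₀ (inl_pushoutSplittingsFst htb) htb
  have hj := hP.comp_splittings_eq hs₀ htb hj₁A hj₁B hj₂A hj₂B
  have : Epi (pushout.desc j₁ j₂ hj) := by
    rw [← epi_comp_iff_of_isIso _ hP.isoPullback.hom,
      hP.pushout_desc_splittings_comp_isoPullback_hom hs₀ htb hj₁A hj₁B hj₂A hj₂B]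
    infer_instance
  exact eq_of_epi_pushout_desc hj h₁ h₂
end

section
/- Let A be a finitely complete category in which every commutative square of split epimorphisms in both directions (with compatible splittings) is a double extension with respect to a class E of epimorphisms, and suppose A has equalisers. Then in any pullback of split epimorphisms, the two canonical splittings into the pullback object are jointly epimorphic. -/
open CategoryTheory CategoryTheory.Limits

/-!
Factor both splittings through the equaliser `e` of `u` and `v`. Composing the pullback
square with `e` gives a square of split epimorphisms with compatible splittings, so its
comparison morphism to the pullback is in `E`, hence an epimorphism. That comparison is `e`
itself up to the isomorphism between `P` and the chosen pullback, so `e` is an epimorphism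
and `e ≫ u = e ≫ v` forces `u = v`.
-/

namespace CategoryTheory.IsPullback

variable {C : Type*} [Category C] {A₀ B₁ B₀ P : C} {f₀ : A₀ ⟶ B₀} {b : B₁ ⟶ B₀}
  {pA : P ⟶ A₀} {pB : P ⟶ B₁}

theorem epi_of_epi_pullbackLift [HasPullback f₀ b] (hP : IsPullback pA pB f₀ b) {M : C}
    (m : M ⟶ P) (w : (m ≫ pB) ≫ b = (m ≫ pA) ≫ f₀)
    [Epi (pullback.lift (m ≫ pA) (m ≫ pB) w.symm)] : Epi m := by
  have hm : m = pullback.lift (m ≫ pA) (m ≫ pB) w.symm ≫ hP.isoPullback.inv :=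
    hP.hom_ext (by rw [Category.assoc, hP.isoPullback_inv_fst, pullback.lift_fst])
      (by rw [Category.assoc, hP.isoPullback_inv_snd, pullback.lift_snd])
  rw [hm]
  infer_instance

theorem section_comp_eq (hP : IsPullback pA pB f₀ b) {s₀ : B₀ ⟶ A₀} {tb : B₀ ⟶ B₁}
    (hs₀ : s₀ ≫ f₀ = 𝟙 B₀) (htb : tb ≫ b = 𝟙 B₀)
    {j₁ : A₀ ⟶ P} (hj₁A : j₁ ≫ pA = 𝟙 A₀) (hj₁B : j₁ ≫ pB = f₀ ≫ tb)
    {j₂ : B₁ ⟶ P} (hj₂A : j₂ ≫ pA = b ≫ s₀) (hj₂B : j₂ ≫ pB = 𝟙 B₁) :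
    s₀ ≫ j₁ = tb ≫ j₂ :=
  hP.hom_ext (by simp [hj₁A, hj₂A, reassoc_of% htb]) (by simp [hj₁B, hj₂B, reassoc_of% hs₀])

end CategoryTheory.IsPullback

/-- Let `A` be finitely complete (in particular with equalisers), and
let `E` be a class of epimorphisms such that every commutative square of split
epimorphisms in both directions (with compatible splittings) is a double extension
with respect to `E` (all four sides and the comparison to the pullback are in `E`).
Then in any pullback of a cospan of split epimorphisms, the two canonical
splittings into the pullback object are jointly epimorphic. -/
theorem stmt8 {C : Type*} [Category C] [HasFiniteLimits C]
    (E : MorphismProperty C)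
    (hepi : ∀ {X Y : C} (f : X ⟶ Y), E f → Epi f)
    (hE5 : ∀ {A₁ A₀ B₁ B₀ : C} (a : A₁ ⟶ A₀) (b : B₁ ⟶ B₀)
      (f₁ : A₁ ⟶ B₁) (f₀ : A₀ ⟶ B₀)
      (ta : A₀ ⟶ A₁) (tb : B₀ ⟶ B₁) (s₁ : B₁ ⟶ A₁) (s₀ : B₀ ⟶ A₀)
      (w : f₁ ≫ b = a ≫ f₀),
      s₁ ≫ a = b ≫ s₀ → ta ≫ f₁ = f₀ ≫ tb → s₀ ≫ ta = tb ≫ s₁ →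
      s₁ ≫ f₁ = 𝟙 B₁ → s₀ ≫ f₀ = 𝟙 B₀ → ta ≫ a = 𝟙 A₀ → tb ≫ b = 𝟙 B₀ →
      E f₁ ∧ E a ∧ E b ∧ E f₀ ∧
        E (pullback.lift a f₁ w.symm : A₁ ⟶ pullback f₀ b))
    -- a pullback of split epimorphisms:
    {A₀ B₁ B₀ : C} (f₀ : A₀ ⟶ B₀) (b : B₁ ⟶ B₀)
    (s₀ : B₀ ⟶ A₀) (tb : B₀ ⟶ B₁) (hs₀ : s₀ ≫ f₀ = 𝟙 B₀) (htb : tb ≫ b = 𝟙 B₀)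
    {P : C} (pA : P ⟶ A₀) (pB : P ⟶ B₁) (hP : IsPullback pA pB f₀ b)
    -- the two canonical splittings into the pullback:
    (j₁ : A₀ ⟶ P) (hj₁A : j₁ ≫ pA = 𝟙 A₀) (hj₁B : j₁ ≫ pB = f₀ ≫ tb)
    (j₂ : B₁ ⟶ P) (hj₂A : j₂ ≫ pA = b ≫ s₀) (hj₂B : j₂ ≫ pB = 𝟙 B₁)
    -- jointly epimorphic:
    {Q : C} (u v : P ⟶ Q) (h₁ : j₁ ≫ u = j₁ ≫ v) (h₂ : j₂ ≫ u = j₂ ≫ v) :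
    u = v := by
  let e := equalizer.ι u v
  let ta : A₀ ⟶ equalizer u v := equalizer.lift j₁ h₁
  let s₁ : B₁ ⟶ equalizer u v := equalizer.lift j₂ h₂
  have w : (e ≫ pB) ≫ b = (e ≫ pA) ≫ f₀ := by simp only [Category.assoc, hP.w]
  have hcompat : s₀ ≫ ta = tb ≫ s₁ := by
    rw [← cancel_mono e]
    simpa [e, ta, s₁] using hP.section_comp_eq hs₀ htb hj₁A hj₁B hj₂A hj₂B
  obtain ⟨-, -, -, -, hcomparison⟩ := hE5 (e ≫ pA) b (e ≫ pB) f₀ ta tb s₁ s₀ w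
    (by simp [e, s₁, hj₂A]) (by simp [e, ta, hj₁B]) hcompat
    (by simp [e, s₁, hj₂B]) hs₀ (by simp [e, ta, hj₁A]) htb
  have : Epi (pullback.lift (e ≫ pA) (e ≫ pB) w.symm) := hepi _ hcomparison
  have : Epi e := hP.epi_of_epi_pullbackLift e w
  exact (cancel_epi e).1 (equalizer.condition u v)
end

section
/- In the category of topological groups with E the class of morphisms admitting a continuous (not necessarily homomorphic) section, the following holds: given a ∈ E with kernel K[a], b ∈ E with kernel K[b], a morphism f with b∘f = a, and a morphism k : K[a] → K[b] restricting f, if k admits a continuous section then f admits a continuous section. -/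
/-!
Correct an arbitrary `β` by the lift `s (b β)` of its image: the quotient `β · f(s(b β))⁻¹`
lies in `K[b]`, so the section `u` of the kernel map lifts it continuously, and multiplying back
by `s (b β)` gives a continuous preimage of `β`.
-/

theorem MonoidHom.exists_continuous_section_of_subgroup {G H : Type*}
    [Group G] [TopologicalSpace G] [IsTopologicalGroup G]
    [Group H] [TopologicalSpace H] [IsTopologicalGroup H]
    (f : G →* H) (hf : Continuous f) (N : Subgroup H)
    (u : N → G) (hu : Continuous u) (hfu : ∀ n : N, f (u n) = n)
    (r : H → G) (hr : Continuous r) (hrN : ∀ β : H, β * (f (r β))⁻¹ ∈ N) :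
    ∃ σ : H → G, Continuous σ ∧ ∀ β : H, f (σ β) = β := by
  refine ⟨fun β => u ⟨β * (f (r β))⁻¹, hrN β⟩ * r β, ?_, fun β => ?_⟩
  · exact (hu.comp <| (continuous_id.mul (hf.comp hr).inv).subtype_mk _).mul hr
  · simp only [map_mul, hfu, inv_mul_cancel_right]

theorem stmt9_general {A₁ A₀ B : Type*}
    [Group A₁] [TopologicalSpace A₁] [IsTopologicalGroup A₁]
    [Group A₀] [TopologicalSpace A₀]
    [Group B] [TopologicalSpace B] [IsTopologicalGroup B]
    (a : A₁ →* A₀)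
    (b : B →* A₀) (hb : Continuous b)
    (f : A₁ →* B) (hf : Continuous f)
    (hcomm : ∀ x : A₁, b (f x) = a x)
    -- a admits a continuous section s:
    (s : A₀ → A₁) (hs : Continuous s) (has : ∀ x : A₀, a (s x) = x)
    -- the restriction k of f to the kernels admits a continuous section u:
    (u : b.ker → a.ker) (hu : Continuous u)
    (hku : ∀ x : b.ker, f ((u x : A₁)) = (x : B)) :
    ∃ σ : B → A₁, Continuous σ ∧ ∀ β : B, f (σ β) = β := by
  have hker : ∀ β : B, β * (f (s (b β)))⁻¹ ∈ b.ker := fun β => by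
    rw [MonoidHom.mem_ker, map_mul, map_inv, hcomm, has, mul_inv_cancel]
  exact f.exists_continuous_section_of_subgroup hf b.ker (fun x => (u x : A₁))
    (continuous_subtype_val.comp hu) hku (s ∘ b) (hs.comp hb) hker

/-- In the category of topological groups with `E` the class of
morphisms admitting a continuous (not necessarily homomorphic) section: given
`a : A₁ → A₀` in `E`, `b : B → A₀` in `E`, a morphism `f : A₁ → B` with `b ∘ f = a`
and the restriction `k : K[a] → K[b]` of `f` between the kernels, if `k` admits a
continuous section then `f` admits a continuous section. -/
theorem stmt9 {A₁ A₀ B : Type*}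
    [Group A₁] [TopologicalSpace A₁] [IsTopologicalGroup A₁]
    [Group A₀] [TopologicalSpace A₀] [IsTopologicalGroup A₀]
    [Group B] [TopologicalSpace B] [IsTopologicalGroup B]
    (a : A₁ →* A₀) (ha : Continuous a)
    (b : B →* A₀) (hb : Continuous b)
    (f : A₁ →* B) (hf : Continuous f)
    (hcomm : ∀ x : A₁, b (f x) = a x)
    -- a admits a continuous section s:
    (s : A₀ → A₁) (hs : Continuous s) (has : ∀ x : A₀, a (s x) = x)
    -- b admits a continuous section t:
    (t : A₀ → B) (ht : Continuous t) (hbt : ∀ x : A₀, b (t x) = x)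
    -- the restriction k of f to the kernels admits a continuous section u:
    (u : b.ker → a.ker) (hu : Continuous u)
    (hku : ∀ x : b.ker, f ((u x : A₁)) = (x : B)) :
    ∃ σ : B → A₁, Continuous σ ∧ ∀ β : B, f (σ β) = β :=
  stmt9_general a b hb f hf hcomm s hs has u hu hku
end

section
/- In the category of sets equipped with both a group structure and a topology (with no compatibility assumed), with morphisms the continuous group homomorphisms, the canonical morphism Z + Z → Z × Z from the coproduct to the product of two copies of the integers (where Z carries the indiscrete topology, the coproduct carries the final topology for the coproduct inclusions, and the product the indiscrete topology) is not a regular epimorphism: the topology on Z × Z is not the quotient topology induced from Z + Z. -/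
/-- The topology of the coproduct `ℤ + ℤ` (the free group on `Bool`, i.e. the free
product of two copies of `ℤ`): the final topology for the two coproduct inclusions
`n ↦ (of true)^n` and `n ↦ (of false)^n`, where each copy of `ℤ` carries the
indiscrete topology `⊤`. -/
noncomputable def coprodTop : TopologicalSpace (FreeGroup Bool) :=
  TopologicalSpace.coinduced (fun n : ℤ => FreeGroup.of true ^ n)
      (⊤ : TopologicalSpace ℤ) ⊔
    TopologicalSpace.coinduced (fun n : ℤ => FreeGroup.of false ^ n)
      (⊤ : TopologicalSpace ℤ)

/-- The canonical comparison morphism `ℤ + ℤ → ℤ × ℤ` from the coproduct to the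
product, induced by the two product inclusions of `ℤ` into `ℤ × ℤ` (written
multiplicatively). -/
noncomputable def comparison : FreeGroup Bool →* Multiplicative ℤ × Multiplicative ℤ :=
  FreeGroup.lift (fun b : Bool =>
    if b then (Multiplicative.ofAdd (1 : ℤ), (1 : Multiplicative ℤ))
    else ((1 : Multiplicative ℤ), Multiplicative.ofAdd (1 : ℤ)))

/-! Composing with the coproduct inclusions, the quotient topology on `ℤ × ℤ` is the final
topology for the two axis inclusions of indiscrete `ℤ`. The point `(1, 1)` lies on neither
axis, so `{(1, 1)}` is open in that topology, whereas the only open sets of the indiscrete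
topology are `∅` and `univ`. -/

open Set TopologicalSpace Topology

theorem isOpen_sup_coinduced_of_disjoint_range {X X' Y : Type*} (tX : TopologicalSpace X)
    (tX' : TopologicalSpace X') {f : X → Y} {g : X' → Y} {s : Set Y}
    (hf : Disjoint s (range f)) (hg : Disjoint s (range g)) :
    IsOpen[coinduced f tX ⊔ coinduced g tX'] s := by
  rw [isOpen_sup, isOpen_coinduced, isOpen_coinduced, preimage_eq_empty hf, preimage_eq_empty hg]
  exact ⟨@isOpen_empty _ tX, @isOpen_empty _ tX'⟩

theorem sup_coinduced_ne_top_of_notMem_range {X X' Y : Type*} [Nontrivial Y]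
    (tX : TopologicalSpace X) (tX' : TopologicalSpace X') {f : X → Y} {g : X' → Y} {y : Y}
    (hf : y ∉ range f) (hg : y ∉ range g) : coinduced f tX ⊔ coinduced g tX' ≠ ⊤ := by
  intro htop
  have hy : IsOpen[⊤] ({y} : Set Y) := htop ▸
    isOpen_sup_coinduced_of_disjoint_range tX tX' (disjoint_singleton_left.2 hf)
      (disjoint_singleton_left.2 hg)
  rcases (isOpen_top_iff _).1 hy with hempty | huniv
  · exact singleton_ne_empty y hempty
  · exact singleton_ne_univ y huniv

theorem comparison_of_true_zpow (n : ℤ) :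
    comparison (FreeGroup.of true ^ n) = (Multiplicative.ofAdd n, 1) := by
  simp [comparison, ← ofAdd_zsmul]

theorem comparison_of_false_zpow (n : ℤ) :
    comparison (FreeGroup.of false ^ n) = (1, Multiplicative.ofAdd n) := by
  simp [comparison, ← ofAdd_zsmul]

/-- in the category of sets with a group structure and a topology (no
compatibility assumed), the canonical morphism `ℤ + ℤ → ℤ × ℤ` is not a regular
epimorphism: the (indiscrete) product topology on `ℤ × ℤ` is not the quotient
topology coinduced from the coproduct topology on `ℤ + ℤ`. -/
theorem stmt12 :
    TopologicalSpace.coinduced (⇑comparison) coprodTop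
      ≠ (⊤ : TopologicalSpace (Multiplicative ℤ × Multiplicative ℤ)) := by
  rw [coprodTop, coinduced_sup, coinduced_compose (tα := ⊤), coinduced_compose (tα := ⊤)]
  refine sup_coinduced_ne_top_of_notMem_range ⊤ ⊤
    (y := (Multiplicative.ofAdd 1, Multiplicative.ofAdd 1)) ?_ ?_
  · rintro ⟨n, hn⟩
    simp [comparison_of_true_zpow, eq_comm (a := (1 : Multiplicative ℤ))] at hn
  · rintro ⟨n, hn⟩
    simp [comparison_of_false_zpow, eq_comm (a := (1 : Multiplicative ℤ))] at hn
end

section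
/- Let A be a category and E a class of morphisms satisfying (E1)–(E4), and suppose that every split epimorphism of split epimorphisms in A is a double extension. Then E¹, the class of double extensions, also satisfies (E4): if a composite of morphisms of extensions is a double extension, then the second factor is a double extension. -/
/-!
Argue with generalized elements. A morphism is in `E` as soon as every generalized element of
its codomain lifts after precomposition with some morphism of `E`, and a square is a double
extension as soon as compatible pairs of generalized elements lift in this sense.

For the right-hand square, take `z : T ⟶ B₀` and `q : T ⟶ C₁` over the same element of `C₀`.
Lift `z` to `p` in `B₁`, then `p ≫ g₁` to `u` in `A₁`, and use the outer double extension to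
find `v` with `a v = a u` and `f₁ g₁ v = q`. Now `p ~g₁ f₁ u ~b f₁ v`, where `~h` is the kernel
pair of `h`. Permuting these kernel pairs gives `w` with `p ~b w ~g₁ f₁ v`, and `w` is the
required lift. The permutation is where split epimorphisms of split epimorphisms enter: the
object of "rectangles" `(u, v, p, w)` lies over `R[a]` as such a split square, and it exists
because the comparison morphism of the outer square is in `E`.
-/

open CategoryTheory CategoryTheory.Limits

section

variable {C : Type*} [Category C] {E : MorphismProperty C}

attribute [local simp] pullback.lift_fst pullback.lift_snd pullback.lift_fst_assoc
  pullback.lift_snd_assoc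

def SplitSquaresAreDblExt (E : MorphismProperty C) : Prop :=
  ∀ {A₁ A₀ B₁ B₀ : C} (a : A₁ ⟶ A₀) (b : B₁ ⟶ B₀)
      (f₁ : A₁ ⟶ B₁) (f₀ : A₀ ⟶ B₀)
      (ta : A₀ ⟶ A₁) (tb : B₀ ⟶ B₁) (s₁ : B₁ ⟶ A₁) (s₀ : B₀ ⟶ A₀),
      f₁ ≫ b = a ≫ f₀ → s₁ ≫ a = b ≫ s₀ → ta ≫ f₁ = f₀ ≫ tb → s₀ ≫ ta = tb ≫ s₁ →
      s₁ ≫ f₁ = 𝟙 B₁ → s₀ ≫ f₀ = 𝟙 B₀ → ta ≫ a = 𝟙 A₀ → tb ≫ b = 𝟙 B₀ →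
      IsDblExt E f₁ a b f₀

theorem exists_lift_of_mem [E.HasPullbacks] [E.IsStableUnderBaseChange] {X Y T : C}
    {q : X ⟶ Y} (hq : E q) (y : T ⟶ Y) :
    ∃ (T' : C) (s : T' ⟶ T) (x : T' ⟶ X), E s ∧ x ≫ q = s ≫ y := by
  have := E.hasPullback y hq
  exact ⟨pullback q y, pullback.snd q y, pullback.fst q y,
    MorphismProperty.of_isPullback (IsPullback.of_hasPullback q y) hq, pullback.condition⟩

namespace IsDblExt

variable {A₁ A₀ B₁ B₀ : C} {f₁ : A₁ ⟶ B₁} {a : A₁ ⟶ A₀} {b : B₁ ⟶ B₀} {f₀ : A₀ ⟶ B₀}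

theorem exists_lift [E.HasPullbacks] [E.IsStableUnderBaseChange]
    (h : IsDblExt E f₁ a b f₀) {T : C} (x₀ : T ⟶ A₀) (y₁ : T ⟶ B₁) (w : x₀ ≫ f₀ = y₁ ≫ b) :
    ∃ (T' : C) (s : T' ⟶ T) (x₁ : T' ⟶ A₁), E s ∧ x₁ ≫ a = s ≫ x₀ ∧ x₁ ≫ f₁ = s ≫ y₁ := by
  obtain ⟨-, -, -, -, P, pA, pB, c, hP, hca, hcf, hc⟩ := h
  obtain ⟨T', s, x₁, hs, hx⟩ := exists_lift_of_mem hc (hP.lift x₀ y₁ w)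
  exact ⟨T', s, x₁, hs, by rw [← hca, reassoc_of% hx, hP.lift_fst],
    by rw [← hcf, reassoc_of% hx, hP.lift_snd]⟩

theorem of_exists_lift [E.HasPullbacks] [E.HasOfPrecompProperty ⊤]
    (hf₁ : E f₁) (ha : E a) (hb : E b) (hf₀ : E f₀) (w : f₁ ≫ b = a ≫ f₀)
    (h : ∀ ⦃T : C⦄ (x₀ : T ⟶ A₀) (y₁ : T ⟶ B₁), x₀ ≫ f₀ = y₁ ≫ b →
      ∃ (T' : C) (s : T' ⟶ T) (x₁ : T' ⟶ A₁), E s ∧ x₁ ≫ a = s ≫ x₀ ∧ x₁ ≫ f₁ = s ≫ y₁) :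
    IsDblExt E f₁ a b f₀ := by
  have := E.hasPullback f₀ hb
  refine ⟨hf₁, ha, hb, hf₀, pullback b f₀, pullback.snd _ _, pullback.fst _ _,
    pullback.lift f₁ a w, (IsPullback.of_hasPullback _ _).flip, by simp, by simp, ?_⟩
  obtain ⟨T', s, x, hs, hxa, hxf⟩ := h _ _ pullback.condition.symm
  refine E.of_precomp (W' := ⊤) x _ (MorphismProperty.top_apply x) ?_
  convert hs using 1
  ext <;> simp [hxa, hxf]

end IsDblExt

variable {A₁ A₀ B₁ B₀ C₁ C₀ : C} {a : A₁ ⟶ A₀} {b : B₁ ⟶ B₀} {c : C₁ ⟶ C₀}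
  {f₁ : A₁ ⟶ B₁} {f₀ : A₀ ⟶ B₀} {g₁ : B₁ ⟶ C₁} {g₀ : B₀ ⟶ C₀}

theorem exists_isDblExt_rectangle [E.HasPullbacks] (hE5 : SplitSquaresAreDblExt E)
    (hb : E b) (hf : f₁ ≫ b = a ≫ f₀) (hg : g₁ ≫ c = b ≫ g₀)
    (hfg : IsDblExt E (f₁ ≫ g₁) a c (f₀ ≫ g₀)) [HasPullback a a] [HasPullback (f₁ ≫ g₁) g₁] :
    ∃ (W : C) (l : W ⟶ pullback (f₁ ≫ g₁) g₁) (t : W ⟶ pullback a a) (q : W ⟶ B₁),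
      IsDblExt E t l (pullback.fst a a) (pullback.fst (f₁ ≫ g₁) g₁) ∧
      q ≫ b = l ≫ pullback.snd _ _ ≫ b ∧ q ≫ g₁ = t ≫ pullback.snd a a ≫ f₁ ≫ g₁ := by
  obtain ⟨hh, -, -, -, P, pA, pC, d, hP, hdA, hdC, hd⟩ := hfg
  have := E.hasPullback b hb
  have := E.hasPullback (pullback.snd b b ≫ g₁) hh
  let φ : pullback (f₁ ≫ g₁) (pullback.snd b b ≫ g₁) ⟶ P :=
    hP.lift (pullback.fst _ _ ≫ a) (pullback.snd _ _ ≫ pullback.fst b b ≫ g₁) (by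
      simp only [Category.assoc, hg, ← reassoc_of% hf, pullback.condition_assoc (f := b)]
      simpa [hg] using pullback.condition (f := f₁ ≫ g₁) (g := pullback.snd b b ≫ g₁) =≫ c)
  have := E.hasPullback φ hd
  -- The generalized elements of `pullback d φ` are the `(u, (v, (p, w)))` with `a u = a v`,
  -- `p ~b w`, `p ≫ g₁ = u ≫ f₁ ≫ g₁` and `w ≫ g₁ = v ≫ f₁ ≫ g₁`.
  let l : pullback d φ ⟶ pullback (f₁ ≫ g₁) g₁ :=
    pullback.lift (pullback.fst _ _) (pullback.snd _ _ ≫ pullback.snd _ _ ≫ pullback.fst b b)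
      (by simpa [φ, hdC] using pullback.condition (f := d) (g := φ) =≫ pC)
  let t : pullback d φ ⟶ pullback a a :=
    pullback.lift (pullback.fst _ _) (pullback.snd _ _ ≫ pullback.fst _ _)
      (by simpa [φ, hdA] using pullback.condition (f := d) (g := φ) =≫ pA)
  let σU : pullback (f₁ ≫ g₁) g₁ ⟶ pullback d φ :=
    pullback.lift (pullback.fst _ _)
      (pullback.lift (pullback.fst _ _) (pullback.snd _ _ ≫ pullback.diagonal b)
        (by simpa using pullback.condition))
      (hP.hom_ext (by simp [φ, hdA]) (by simp [φ, hdC, pullback.condition]))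
  let σK : pullback a a ⟶ pullback d φ :=
    pullback.lift (pullback.fst _ _)
      (pullback.lift (pullback.snd _ _)
        (pullback.lift (pullback.fst _ _ ≫ f₁) (pullback.snd _ _ ≫ f₁)
          (by simp only [Category.assoc, hf, pullback.condition_assoc]))
        (by simp))
      (hP.hom_ext (by simp [φ, hdA, pullback.condition]) (by simp [φ, hdC]))
  refine ⟨pullback d φ, l, t, pullback.snd _ _ ≫ pullback.snd _ _ ≫ pullback.snd b b,
    hE5 l (pullback.fst a a) t (pullback.fst _ _) σU (pullback.diagonal a) σK
      (pullback.lift (𝟙 A₁) f₁ (by simp)) ?_ ?_ ?_ ?_ ?_ ?_ ?_ ?_,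
    by simp [l, pullback.condition], by simp [t, pullback.condition]⟩
  all_goals try ext
  all_goals simp [l, t, σU, σK]

theorem exists_kernelPair_permutation [E.HasPullbacks] [E.IsStableUnderBaseChange]
    (hE5 : SplitSquaresAreDblExt E) (ha : E a) (hb : E b) (hf : f₁ ≫ b = a ≫ f₀)
    (hg : g₁ ≫ c = b ≫ g₀) (hfg : IsDblExt E (f₁ ≫ g₁) a c (f₀ ≫ g₀)) {T : C}
    (p : T ⟶ B₁) (u v : T ⟶ A₁) (hpu : u ≫ f₁ ≫ g₁ = p ≫ g₁) (huv : u ≫ a = v ≫ a) :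
    ∃ (T' : C) (s : T' ⟶ T) (w : T' ⟶ B₁), E s ∧ w ≫ b = s ≫ p ≫ b ∧
      w ≫ g₁ = s ≫ v ≫ f₁ ≫ g₁ := by
  have := E.hasPullback a ha
  have := E.hasPullback g₁ hfg.1
  obtain ⟨W, l, t, q, hW, hqb, hqg⟩ := exists_isDblExt_rectangle hE5 hb hf hg hfg
  obtain ⟨T', s, x, hs, hxl, hxt⟩ :=
    hW.exists_lift (pullback.lift u p hpu) (pullback.lift u v huv) (by simp)
  exact ⟨T', s, x ≫ q, hs, by simp [hqb, reassoc_of% hxl], by simp [hqg, reassoc_of% hxt]⟩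

theorem IsDblExt.of_precomp [E.HasPullbacks] [E.IsStableUnderBaseChange]
    [E.IsStableUnderComposition] [E.HasOfPrecompProperty ⊤] (hE5 : SplitSquaresAreDblExt E)
    (ha : E a) (hb : E b) (hc : E c) (hf : f₁ ≫ b = a ≫ f₀) (hg : g₁ ≫ c = b ≫ g₀)
    (hfg : IsDblExt E (f₁ ≫ g₁) a c (f₀ ≫ g₀)) : IsDblExt E g₁ b c g₀ := by
  have hg₁ : E g₁ := E.of_precomp (W' := ⊤) f₁ g₁ (top_apply f₁) hfg.1
  have hg₀ : E g₀ := E.of_precomp (W' := ⊤) f₀ g₀ (top_apply f₀) hfg.2.2.2.1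
  refine .of_exists_lift hg₁ hb hc hg₀ hg fun T z q hzq ↦ ?_
  obtain ⟨T₁, s₁, p, hs₁, hp⟩ := exists_lift_of_mem hb z
  obtain ⟨T₂, s₂, u, hs₂, hu⟩ := exists_lift_of_mem hfg.1 (p ≫ g₁)
  obtain ⟨T₃, s₃, v, hs₃, hva, hvq⟩ := hfg.exists_lift (u ≫ a) (s₂ ≫ s₁ ≫ q) (by
    simp only [Category.assoc]
    rw [← reassoc_of% hf, ← hg, reassoc_of% hu, hg, reassoc_of% hp, hzq])
  obtain ⟨T₄, s₄, w, hs₄, hwb, hwg⟩ := exists_kernelPair_permutation hE5 ha hb hf hg hfg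
    (s₃ ≫ s₂ ≫ p) (s₃ ≫ u) v (by simp [hu]) (by simp [hva])
  refine ⟨T₄, s₄ ≫ s₃ ≫ s₂ ≫ s₁, w, ?_, by simp [hwb, hp], by simp [hwg, hvq]⟩
  exact E.comp_mem _ _ hs₄ (E.comp_mem _ _ hs₃ (E.comp_mem _ _ hs₂ hs₁))

end

theorem stmt13_general {C : Type*} [Category C] (E : MorphismProperty C)
    (hE2exists : ∀ {X Y Z : C} (f : X ⟶ Z) (g : Y ⟶ Z), E f → HasPullback g f)
    (hE2stable : ∀ {P X Y Z : C} (fst : P ⟶ X) (snd : P ⟶ Y) (f : X ⟶ Z) (g : Y ⟶ Z),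
      IsPullback fst snd f g → E g → E fst)
    (hE3 : ∀ {X Y Z : C} (f : X ⟶ Y) (g : Y ⟶ Z), E f → E g → E (f ≫ g))
    (hE4 : ∀ {X Y Z : C} (f : X ⟶ Y) (g : Y ⟶ Z), E (f ≫ g) → E g)
    (hE5 : ∀ {A₁ A₀ B₁ B₀ : C} (a : A₁ ⟶ A₀) (b : B₁ ⟶ B₀)
      (f₁ : A₁ ⟶ B₁) (f₀ : A₀ ⟶ B₀)
      (ta : A₀ ⟶ A₁) (tb : B₀ ⟶ B₁) (s₁ : B₁ ⟶ A₁) (s₀ : B₀ ⟶ A₀),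
      f₁ ≫ b = a ≫ f₀ → s₁ ≫ a = b ≫ s₀ → ta ≫ f₁ = f₀ ≫ tb → s₀ ≫ ta = tb ≫ s₁ →
      s₁ ≫ f₁ = 𝟙 B₁ → s₀ ≫ f₀ = 𝟙 B₀ → ta ≫ a = 𝟙 A₀ → tb ≫ b = 𝟙 B₀ →
      IsDblExt E f₁ a b f₀) :
    ∀ {A₁ A₀ B₁ B₀ C₁ C₀ : C} (a : A₁ ⟶ A₀) (b : B₁ ⟶ B₀) (c : C₁ ⟶ C₀)
      (f₁ : A₁ ⟶ B₁) (f₀ : A₀ ⟶ B₀) (g₁ : B₁ ⟶ C₁) (g₀ : B₀ ⟶ C₀),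
      E a → E b → E c → f₁ ≫ b = a ≫ f₀ → g₁ ≫ c = b ≫ g₀ →
      IsDblExt E (f₁ ≫ g₁) a c (f₀ ≫ g₀) → IsDblExt E g₁ b c g₀ := by
  have : E.HasPullbacks := ⟨fun g hf ↦ have := hE2exists _ g hf; hasPullback_symmetry _ _⟩
  have : E.IsStableUnderBaseChange := ⟨fun sq hg ↦ hE2stable _ _ _ _ sq.flip hg⟩
  have : E.IsStableUnderComposition := ⟨hE3⟩
  have : E.HasOfPrecompProperty ⊤ := ⟨fun f g _ ↦ hE4 f g⟩
  intro A₁ A₀ B₁ B₀ C₁ C₀ a b c f₁ f₀ g₁ g₀ ha hb hc hf hg hfg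
  exact hfg.of_precomp hE5 ha hb hc hf hg

/-- if `(A, E)` satisfies (E1)–(E4) and every split epimorphism of
split epimorphisms is a double extension, then the class `E¹` of double extensions
satisfies (E4): if a composite of morphisms of extensions is a double extension,
then the second factor is a double extension. -/
theorem stmt13 {C : Type*} [Category C] (E : MorphismProperty C)
    (hE1 : ∀ {X Y : C} (f : X ⟶ Y), IsIso f → E f)
    (hE2exists : ∀ {X Y Z : C} (f : X ⟶ Z) (g : Y ⟶ Z), E f → HasPullback g f)
    (hE2stable : ∀ {P X Y Z : C} (fst : P ⟶ X) (snd : P ⟶ Y) (f : X ⟶ Z) (g : Y ⟶ Z),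
      IsPullback fst snd f g → E g → E fst)
    (hE3 : ∀ {X Y Z : C} (f : X ⟶ Y) (g : Y ⟶ Z), E f → E g → E (f ≫ g))
    (hE4 : ∀ {X Y Z : C} (f : X ⟶ Y) (g : Y ⟶ Z), E (f ≫ g) → E g)
    (hE5 : ∀ {A₁ A₀ B₁ B₀ : C} (a : A₁ ⟶ A₀) (b : B₁ ⟶ B₀)
      (f₁ : A₁ ⟶ B₁) (f₀ : A₀ ⟶ B₀)
      (ta : A₀ ⟶ A₁) (tb : B₀ ⟶ B₁) (s₁ : B₁ ⟶ A₁) (s₀ : B₀ ⟶ A₀),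
      f₁ ≫ b = a ≫ f₀ → s₁ ≫ a = b ≫ s₀ → ta ≫ f₁ = f₀ ≫ tb → s₀ ≫ ta = tb ≫ s₁ →
      s₁ ≫ f₁ = 𝟙 B₁ → s₀ ≫ f₀ = 𝟙 B₀ → ta ≫ a = 𝟙 A₀ → tb ≫ b = 𝟙 B₀ →
      IsDblExt E f₁ a b f₀) :
    ∀ {A₁ A₀ B₁ B₀ C₁ C₀ : C} (a : A₁ ⟶ A₀) (b : B₁ ⟶ B₀) (c : C₁ ⟶ C₀)
      (f₁ : A₁ ⟶ B₁) (f₀ : A₀ ⟶ B₀) (g₁ : B₁ ⟶ C₁) (g₀ : B₀ ⟶ C₀),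
      E a → E b → E c → f₁ ≫ b = a ≫ f₀ → g₁ ≫ c = b ≫ g₀ →
      IsDblExt E (f₁ ≫ g₁) a c (f₀ ≫ g₀) → IsDblExt E g₁ b c g₀ :=
  stmt13_general E hE2exists hE2stable hE3 hE4 hE5
end

section
/- Let A be a naturally Mal'tsev category (every pullback square of split epimorphisms, viewed downward, is also a pushout of the corresponding split monomorphisms, viewed upward). Then with E the class of all split epimorphisms of A, every split epimorphism of split epimorphisms is a double extension: the comparison morphism to the pullback is a split epimorphism. -/
/-!
Pull the cospan `f₀, b` back to `P`. The pullback projections are split epimorphisms, split by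
`(𝟙, f₀ ≫ tb) : A₀ ⟶ P` and `(b ≫ s₀, 𝟙) : B₁ ⟶ P`, so by the naturally Mal'tsev property `P` is
the pushout of these two splittings along `s₀` and `tb`. The compatible splittings `ta` and `s₁`
of the given square then induce a map `P ⟶ A₁`, which is a section of the comparison map, since
the comparison map carries `ta` and `s₁` to the two pushout coprojections.
-/

open CategoryTheory CategoryTheory.Limits

namespace CategoryTheory

def NaturallyMaltsev (C : Type*) [Category C] : Prop :=
  ∀ {A₁ A₀ B₁ B₀ : C} (a : A₁ ⟶ A₀) (b : B₁ ⟶ B₀) (f₁ : A₁ ⟶ B₁) (f₀ : A₀ ⟶ B₀)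
    (ta : A₀ ⟶ A₁) (tb : B₀ ⟶ B₁) (s₁ : B₁ ⟶ A₁) (s₀ : B₀ ⟶ A₀),
    f₁ ≫ b = a ≫ f₀ → s₁ ≫ a = b ≫ s₀ → ta ≫ f₁ = f₀ ≫ tb → s₀ ≫ ta = tb ≫ s₁ →
    s₁ ≫ f₁ = 𝟙 B₁ → s₀ ≫ f₀ = 𝟙 B₀ → ta ≫ a = 𝟙 A₀ → tb ≫ b = 𝟙 B₀ →
    IsPullback f₁ a b f₀ → IsPushout s₀ tb ta s₁

variable {C : Type*} [Category C]

theorem NaturallyMaltsev.isPushout_sections_of_isPullback (hM : NaturallyMaltsev C)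
    {P A₀ B₁ B₀ : C} {pA : P ⟶ A₀} {pB : P ⟶ B₁} {f₀ : A₀ ⟶ B₀} {b : B₁ ⟶ B₀}
    (hP : IsPullback pA pB f₀ b) {s₀ : B₀ ⟶ A₀} {tb : B₀ ⟶ B₁}
    (hs₀ : s₀ ≫ f₀ = 𝟙 B₀) (htb : tb ≫ b = 𝟙 B₀)
    {u : A₀ ⟶ P} (hupA : u ≫ pA = 𝟙 A₀) (hupB : u ≫ pB = f₀ ≫ tb)
    {v : B₁ ⟶ P} (hvpA : v ≫ pA = b ≫ s₀) (hvpB : v ≫ pB = 𝟙 B₁) :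
    IsPushout tb s₀ v u := by
  have hsq : tb ≫ v = s₀ ≫ u := hP.hom_ext
    (by simp only [Category.assoc, hupA, hvpA, reassoc_of% htb, Category.comp_id])
    (by simp only [Category.assoc, hupB, hvpB, reassoc_of% hs₀, Category.comp_id])
  exact hM pB f₀ pA b v s₀ u tb hP.w hupB hvpA hsq hupA htb hvpB hs₀ hP

theorem IsPushout.isSplitEpi_of_comp_eq_inl_inr {Z X Y P A : C} {f : Z ⟶ X} {g : Z ⟶ Y}
    {inl : X ⟶ P} {inr : Y ⟶ P} (hPO : IsPushout f g inl inr)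
    {x : X ⟶ A} {y : Y ⟶ A} (hxy : f ≫ x = g ≫ y)
    {c : A ⟶ P} (hx : x ≫ c = inl) (hy : y ≫ c = inr) : IsSplitEpi c :=
  ⟨⟨hPO.desc x y hxy, hPO.hom_ext
    (by rw [hPO.inl_desc_assoc, hx, Category.comp_id])
    (by rw [hPO.inr_desc_assoc, hy, Category.comp_id])⟩⟩

end CategoryTheory

theorem stmt14_general {C : Type*} [Category C]
    (hNat : ∀ {A₁ A₀ B₁ B₀ : C} (a : A₁ ⟶ A₀) (b : B₁ ⟶ B₀)
      (f₁ : A₁ ⟶ B₁) (f₀ : A₀ ⟶ B₀)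
      (ta : A₀ ⟶ A₁) (tb : B₀ ⟶ B₁) (s₁ : B₁ ⟶ A₁) (s₀ : B₀ ⟶ A₀),
      f₁ ≫ b = a ≫ f₀ → s₁ ≫ a = b ≫ s₀ → ta ≫ f₁ = f₀ ≫ tb → s₀ ≫ ta = tb ≫ s₁ →
      s₁ ≫ f₁ = 𝟙 B₁ → s₀ ≫ f₀ = 𝟙 B₀ → ta ≫ a = 𝟙 A₀ → tb ≫ b = 𝟙 B₀ →
      IsPullback f₁ a b f₀ → IsPushout s₀ tb ta s₁)
    -- a split epimorphism of split epimorphisms: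
    {A₁ A₀ B₁ B₀ : C} (a : A₁ ⟶ A₀) (b : B₁ ⟶ B₀)
    (f₁ : A₁ ⟶ B₁) (f₀ : A₀ ⟶ B₀)
    (ta : A₀ ⟶ A₁) (tb : B₀ ⟶ B₁) (s₁ : B₁ ⟶ A₁) (s₀ : B₀ ⟶ A₀)
    (w₂ : s₁ ≫ a = b ≫ s₀) (w₃ : ta ≫ f₁ = f₀ ≫ tb)
    (w₄ : s₀ ≫ ta = tb ≫ s₁)
    (e₁ : s₁ ≫ f₁ = 𝟙 B₁) (e₂ : s₀ ≫ f₀ = 𝟙 B₀) (e₃ : ta ≫ a = 𝟙 A₀)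
    (e₄ : tb ≫ b = 𝟙 B₀)
    -- the pullback of the cospan of split epimorphisms exists:
    {P : C} (pA : P ⟶ A₀) (pB : P ⟶ B₁) (hP : IsPullback pA pB f₀ b)
    -- the comparison morphism to the pullback:
    (c : A₁ ⟶ P) (hcA : c ≫ pA = a) (hcB : c ≫ pB = f₁) :
    IsSplitEpi c := by
  let u : A₀ ⟶ P := hP.lift (𝟙 A₀) (f₀ ≫ tb) (by simp [e₄])
  let v : B₁ ⟶ P := hP.lift (b ≫ s₀) (𝟙 B₁) (by simp [e₂])
  have hPO : IsPushout tb s₀ v u :=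
    NaturallyMaltsev.isPushout_sections_of_isPullback hNat hP e₂ e₄
      (hP.lift_fst _ _ _) (hP.lift_snd _ _ _) (hP.lift_fst _ _ _) (hP.lift_snd _ _ _)
  refine hPO.isSplitEpi_of_comp_eq_inl_inr w₄.symm ?_ ?_
  · exact hP.hom_ext (by simp [v, hcA, w₂]) (by simp [v, hcB, e₁])
  · exact hP.hom_ext (by simp [u, hcA, e₃]) (by simp [u, hcB, w₃])

/-- let `A` be naturally Mal'tsev, in the form: every downward
pullback square of split epimorphisms (with compatible splittings) is an upward
pushout of the corresponding split monomorphisms. Then, with `E` the class of split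
epimorphisms, every split epimorphism of split epimorphisms is a double extension:
the comparison morphism to the pullback is a split epimorphism. -/
theorem stmt14 {C : Type*} [Category C]
    (hNat : ∀ {A₁ A₀ B₁ B₀ : C} (a : A₁ ⟶ A₀) (b : B₁ ⟶ B₀)
      (f₁ : A₁ ⟶ B₁) (f₀ : A₀ ⟶ B₀)
      (ta : A₀ ⟶ A₁) (tb : B₀ ⟶ B₁) (s₁ : B₁ ⟶ A₁) (s₀ : B₀ ⟶ A₀),
      f₁ ≫ b = a ≫ f₀ → s₁ ≫ a = b ≫ s₀ → ta ≫ f₁ = f₀ ≫ tb → s₀ ≫ ta = tb ≫ s₁ →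
      s₁ ≫ f₁ = 𝟙 B₁ → s₀ ≫ f₀ = 𝟙 B₀ → ta ≫ a = 𝟙 A₀ → tb ≫ b = 𝟙 B₀ →
      IsPullback f₁ a b f₀ → IsPushout s₀ tb ta s₁)
    -- a split epimorphism of split epimorphisms:
    {A₁ A₀ B₁ B₀ : C} (a : A₁ ⟶ A₀) (b : B₁ ⟶ B₀)
    (f₁ : A₁ ⟶ B₁) (f₀ : A₀ ⟶ B₀)
    (ta : A₀ ⟶ A₁) (tb : B₀ ⟶ B₁) (s₁ : B₁ ⟶ A₁) (s₀ : B₀ ⟶ A₀)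
    (w : f₁ ≫ b = a ≫ f₀) (w₂ : s₁ ≫ a = b ≫ s₀) (w₃ : ta ≫ f₁ = f₀ ≫ tb)
    (w₄ : s₀ ≫ ta = tb ≫ s₁)
    (e₁ : s₁ ≫ f₁ = 𝟙 B₁) (e₂ : s₀ ≫ f₀ = 𝟙 B₀) (e₃ : ta ≫ a = 𝟙 A₀)
    (e₄ : tb ≫ b = 𝟙 B₀)
    -- the pullback of the cospan of split epimorphisms exists:
    {P : C} (pA : P ⟶ A₀) (pB : P ⟶ B₁) (hP : IsPullback pA pB f₀ b)
    -- the comparison morphism to the pullback: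
    (c : A₁ ⟶ P) (hcA : c ≫ pA = a) (hcB : c ≫ pB = f₁) :
    IsSplitEpi c :=
  stmt14_general hNat a b f₁ f₀ ta tb s₁ s₀ w₂ w₃ w₄ e₁ e₂ e₃ e₄ pA pB hP c hcA hcB
end

section
/- Let A be a regular category and consider the class E of regular epimorphisms. Suppose every commutative square of split epimorphisms in both directions (with compatible splittings) is a double extension (the comparison to the pullback is a regular epimorphism). Then, given a reflexive graph structure realised as a split epimorphism of split epimorphisms arising from a pullback along regular epimorphisms, the induced comparison of kernel pairs r : R[f₁] → R[f₀] is a regular epimorphism whenever the square (f₁, f₀) with vertical regular epimorphisms a, b is a double extension. -/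
/-!
The kernel-pair map `r : R[f₁] ⟶ R[f₀]`, `(x, y) ↦ (a x, a y)`, factors through
`A₁ ×_{B₀} A₀` as `(x, y) ↦ (x, a y) ↦ (a x, a y)`. The first factor is a base change of the
comparison `⟨a, f₁⟩ : A₁ ⟶ A₀ ×_{B₀} B₁` and the second a base change of `a`, so both are regular
epimorphisms. In a regular category every strong epimorphism is regular, hence so is their
composite `r`.
-/

open CategoryTheory CategoryTheory.Limits

namespace CategoryTheory

variable {C : Type*} [Category C]

theorem Regular.of_hasCoequalizer_of_isStableUnderBaseChange [HasFiniteLimits C]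
    (hcoeq : ∀ {X Y : C} (f : X ⟶ Y), HasCoequalizer (pullback.fst f f) (pullback.snd f f))
    (hstable : ∀ {P X Y Z : C} (fst : P ⟶ X) (snd : P ⟶ Y) (f : X ⟶ Z) (g : Y ⟶ Z),
      IsPullback fst snd f g → Nonempty (RegularEpi g) → Nonempty (RegularEpi fst)) :
    Regular C where
  hasCoequalizer_of_isKernelPair {_ _ _ f _ _} k :=
    have := hcoeq f
    hasColimit_of_iso (F := parallelPair (pullback.fst f f) (pullback.snd f f))
      (parallelPair.ext k.isoPullback (Iso.refl _))
  regularEpiIsStableUnderBaseChange :=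
    ⟨fun sq ⟨hg⟩ => ⟨hstable _ _ _ _ sq.flip hg⟩⟩

instance Regular.isRegularEpi_comp [Regular C] {X Y Z : C} (f : X ⟶ Y) (g : Y ⟶ Z)
    [IsRegularEpi f] [IsRegularEpi g] : IsRegularEpi (f ≫ g) :=
  have := strongEpi_comp f g
  inferInstance

section KernelPair

variable [HasPullbacks C]

theorem isPullback_pullbackMap_comp_left {A₁ A₀ B : C} (a : A₁ ⟶ A₀) (g : A₀ ⟶ B) :
    IsPullback (pullback.map (a ≫ g) g g g a (𝟙 A₀) (𝟙 B) (by simp) (by simp))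
      (pullback.fst (a ≫ g) g) (pullback.fst g g) a := by
  refine .of_right ?_ (pullback.lift_fst _ _ _) (IsPullback.of_hasPullback g g).flip
  simpa only [pullback.lift_snd, Category.comp_id] using
    (IsPullback.of_hasPullback (a ≫ g) g).flip

variable {A₁ A₀ B₁ B₀ : C} {f₁ : A₁ ⟶ B₁} {f₀ : A₀ ⟶ B₀} {a : A₁ ⟶ A₀} {b : B₁ ⟶ B₀}

theorem isPullback_pullbackMap_comparison (w : f₁ ≫ b = a ≫ f₀) :
    IsPullback (pullback.map f₁ f₁ (a ≫ f₀) f₀ (𝟙 A₁) a b (by simp [w]) w)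
      (pullback.snd f₁ f₁)
      (pullback.lift (pullback.snd (a ≫ f₀) f₀) (pullback.fst (a ≫ f₀) f₀ ≫ f₁)
        (by simp [w, ← pullback.condition]))
      (pullback.lift a f₁ w.symm) := by
  have hright : IsPullback (pullback.fst (a ≫ f₀) f₀)
      (pullback.lift (pullback.snd (a ≫ f₀) f₀) (pullback.fst (a ≫ f₀) f₀ ≫ f₁)
        (by simp [w, ← pullback.condition])) f₁ (pullback.snd f₀ b) := by
    refine .of_bot ?_ (pullback.lift_snd _ _ _).symm (IsPullback.of_hasPullback f₀ b).flip
    simpa only [pullback.lift_fst, w] using IsPullback.of_hasPullback (a ≫ f₀) f₀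
  refine .of_right ?_ ?_ hright
  · simpa only [pullback.lift_fst, pullback.lift_snd, Category.comp_id] using
      IsPullback.of_hasPullback f₁ f₁
  · apply pullback.hom_ext <;>
      simp only [Category.assoc, Category.id_comp, pullback.lift_fst, pullback.lift_snd,
        pullback.lift_fst_assoc, pullback.condition]

theorem pullback.map_eq_map_comp_map (w : f₁ ≫ b = a ≫ f₀) :
    pullback.map f₁ f₁ f₀ f₀ a a b w w =
      pullback.map f₁ f₁ (a ≫ f₀) f₀ (𝟙 A₁) a b (by simp [w]) w ≫
        pullback.map (a ≫ f₀) f₀ f₀ f₀ a (𝟙 A₀) (𝟙 B₀) (by simp) (by simp) := by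
  rw [pullback.map_comp]
  simp

theorem Regular.isRegularEpi_pullbackMap_of_isRegularEpi_lift [Regular C]
    (w : f₁ ≫ b = a ≫ f₀) [IsRegularEpi a] [IsRegularEpi (pullback.lift a f₁ w.symm)] :
    IsRegularEpi (pullback.map f₁ f₁ f₀ f₀ a a b w w) := by
  have : IsRegularEpi (pullback.map f₁ f₁ (a ≫ f₀) f₀ (𝟙 A₁) a b (by simp [w]) w) :=
    Regular.regularEpiIsStableUnderBaseChange.of_isPullback
      (isPullback_pullbackMap_comparison w).flip ‹_›
  have : IsRegularEpi (pullback.map (a ≫ f₀) f₀ f₀ f₀ a (𝟙 A₀) (𝟙 B₀) (by simp) (by simp)) :=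
    Regular.regularEpiIsStableUnderBaseChange.of_isPullback
      (isPullback_pullbackMap_comp_left a f₀).flip ‹_›
  rw [pullback.map_eq_map_comp_map w]
  infer_instance

end KernelPair

end CategoryTheory

theorem stmt16_general {C : Type*} [Category C] [HasFiniteLimits C]
    (hcoeq : ∀ {X Y : C} (f : X ⟶ Y),
      HasCoequalizer (pullback.fst f f) (pullback.snd f f))
    (hstable : ∀ {P X Y Z : C} (fst : P ⟶ X) (snd : P ⟶ Y) (f : X ⟶ Z) (g : Y ⟶ Z),
      IsPullback fst snd f g → Nonempty (RegularEpi g) → Nonempty (RegularEpi fst))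
    {A₁ A₀ B₁ B₀ : C} (f₁ : A₁ ⟶ B₁) (f₀ : A₀ ⟶ B₀) (a : A₁ ⟶ A₀) (b : B₁ ⟶ B₀)
    (ha : Nonempty (RegularEpi a))
    (w : f₁ ≫ b = a ≫ f₀)
    (hdbl : Nonempty (RegularEpi (pullback.lift a f₁ w.symm : A₁ ⟶ pullback f₀ b))) :
    Nonempty (RegularEpi (pullback.map f₁ f₁ f₀ f₀ a a b w w :
      pullback f₁ f₁ ⟶ pullback f₀ f₀)) := by
  have := Regular.of_hasCoequalizer_of_isStableUnderBaseChange hcoeq hstable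
  have : IsRegularEpi a := ⟨ha⟩
  have : IsRegularEpi (pullback.lift a f₁ w.symm : A₁ ⟶ pullback f₀ b) := ⟨hdbl⟩
  exact (Regular.isRegularEpi_pullbackMap_of_isRegularEpi_lift w).regularEpi

/-- in a regular category (finitely complete, coequalisers of kernel
pairs, pullback-stable regular epimorphisms) in which every split epimorphism of
split epimorphisms is a double extension with respect to the regular epimorphisms,
given a commutative square of regular epimorphisms `f₁ : A₁ → B₁`, `f₀ : A₀ → B₀`
(horizontal) and `a, b` (vertical) which is a double extension (the comparison
`⟨a, f₁⟩` to the pullback is a regular epimorphism), the induced comparison of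
kernel pairs `r : R[f₁] → R[f₀]` is a regular epimorphism. -/
theorem stmt16 {C : Type*} [Category C] [HasFiniteLimits C]
    (hcoeq : ∀ {X Y : C} (f : X ⟶ Y),
      HasCoequalizer (pullback.fst f f) (pullback.snd f f))
    (hstable : ∀ {P X Y Z : C} (fst : P ⟶ X) (snd : P ⟶ Y) (f : X ⟶ Z) (g : Y ⟶ Z),
      IsPullback fst snd f g → Nonempty (RegularEpi g) → Nonempty (RegularEpi fst))
    (hE5 : ∀ {A₁ A₀ B₁ B₀ : C} (a : A₁ ⟶ A₀) (b : B₁ ⟶ B₀)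
      (f₁ : A₁ ⟶ B₁) (f₀ : A₀ ⟶ B₀)
      (ta : A₀ ⟶ A₁) (tb : B₀ ⟶ B₁) (s₁ : B₁ ⟶ A₁) (s₀ : B₀ ⟶ A₀)
      (w : f₁ ≫ b = a ≫ f₀),
      s₁ ≫ a = b ≫ s₀ → ta ≫ f₁ = f₀ ≫ tb → s₀ ≫ ta = tb ≫ s₁ →
      s₁ ≫ f₁ = 𝟙 B₁ → s₀ ≫ f₀ = 𝟙 B₀ → ta ≫ a = 𝟙 A₀ → tb ≫ b = 𝟙 B₀ →
      Nonempty (RegularEpi (pullback.lift a f₁ w.symm : A₁ ⟶ pullback f₀ b)))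
    {A₁ A₀ B₁ B₀ : C} (f₁ : A₁ ⟶ B₁) (f₀ : A₀ ⟶ B₀) (a : A₁ ⟶ A₀) (b : B₁ ⟶ B₀)
    (hf₁ : Nonempty (RegularEpi f₁)) (hf₀ : Nonempty (RegularEpi f₀))
    (ha : Nonempty (RegularEpi a)) (hb : Nonempty (RegularEpi b))
    (w : f₁ ≫ b = a ≫ f₀)
    (hdbl : Nonempty (RegularEpi (pullback.lift a f₁ w.symm : A₁ ⟶ pullback f₀ b))) :
    Nonempty (RegularEpi (pullback.map f₁ f₁ f₀ f₀ a a b w w :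
      pullback f₁ f₁ ⟶ pullback f₀ f₀)) :=
  stmt16_general hcoeq hstable f₁ f₀ a b ha w hdbl
end

section
/- Let E be a class of morphisms in a category A satisfying (E1)–(E3). Define a two-fold arrow (commutative square with sides in E) to be a double extension if the comparison to the pullback is in E. Then the class E¹ of double extensions in the category Ext A of E-morphisms again satisfies (E1)–(E3): it contains all isomorphisms of extensions, pullbacks of double extensions exist in Ext A (computed degreewise) and are double extensions, and double extensions are closed under composition. -/
open CategoryTheory CategoryTheory.Limits

/-! For the composite of double extensions `f` and `g`, pasting gives
`A₀ ×_{C₀} C₁ ≅ A₀ ×_{B₀} (B₀ ×_{C₀} C₁)`, and the comparison map is that of `f` followed by a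
base change of that of `g`. For the pullback of `g` along `h`, pasting gives
`P₀ ×_{X₀} X₁ ≅ (Y₀ ×_{Z₀} Z₁) ×_{Z₁} X₁`, and the comparison map is a base change of that of `g`.
In both cases (E2) and (E3) for `E` conclude. -/

namespace CategoryTheory.IsPullback

variable {C : Type*} [Category C]

theorem lift_isPullback_of_comp {P Q W X Y Z : C} {fst : Q ⟶ X} {snd : Q ⟶ Y} {f : X ⟶ Z}
    {g : Y ⟶ Z} (hQ : IsPullback fst snd f g) {u : P ⟶ X} {v : P ⟶ W} {e : W ⟶ Y}
    (hP : IsPullback u v f (e ≫ g)) :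
    IsPullback (hQ.lift u (v ≫ e) (by rw [hP.w, Category.assoc])) v snd e :=
  IsPullback.of_right (by simpa using hP) (hQ.lift_snd _ _ _) hQ

/-- Both squares exhibit `S` as the pullback of `g₀` along the diagonal `X₁ ⟶ Z₀`. -/
theorem of_isPullback_cube {S P₀ Q X₁ X₀ Y₀ Z₁ Z₀ : C} {x : X₁ ⟶ X₀} {h₁ : X₁ ⟶ Z₁}
    {h₀ : X₀ ⟶ Z₀} {z : Z₁ ⟶ Z₀} {g₀ : Y₀ ⟶ Z₀} (w : h₁ ≫ z = x ≫ h₀)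
    {u₀ : P₀ ⟶ X₀} {v₀ : P₀ ⟶ Y₀} (hP₀ : IsPullback u₀ v₀ h₀ g₀)
    {qA : Q ⟶ Y₀} {qB : Q ⟶ Z₁} (hQ : IsPullback qA qB g₀ z)
    {sX : S ⟶ X₁} {sQ : S ⟶ Q} (hS : IsPullback sX sQ h₁ qB)
    {σ : S ⟶ P₀} (hσu : σ ≫ u₀ = sX ≫ x) (hσv : σ ≫ v₀ = sQ ≫ qA) :
    IsPullback σ sX u₀ x := by
  have hdiag : IsPullback (σ ≫ v₀) sX g₀ (x ≫ h₀) := by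
    rw [hσv, ← w]
    exact hS.flip.paste_horiz hQ
  exact hdiag.of_right hσu hP₀.flip

end CategoryTheory.IsPullback

namespace IsDblExt

variable {C : Type*} [Category C] {E : MorphismProperty C}

theorem w {A₁ A₀ B₁ B₀ : C} {f₁ : A₁ ⟶ B₁} {a : A₁ ⟶ A₀} {b : B₁ ⟶ B₀} {f₀ : A₀ ⟶ B₀}
    (h : IsDblExt E f₁ a b f₀) : f₁ ≫ b = a ≫ f₀ := by
  obtain ⟨-, -, -, -, P, pA, pB, c, hP, rfl, rfl, -⟩ := h
  rw [Category.assoc, Category.assoc, hP.w]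

theorem of_isPullback [E.IsStableUnderBaseChange] [E.IsStableUnderComposition]
    {A₁ A₀ B₁ B₀ P : C} {f₁ : A₁ ⟶ B₁} {a : A₁ ⟶ A₀} {b : B₁ ⟶ B₀} {f₀ : A₀ ⟶ B₀}
    {pA : P ⟶ A₀} {pB : P ⟶ B₁} (hP : IsPullback pA pB f₀ b) (hb : E b) (hf₀ : E f₀)
    {c : A₁ ⟶ P} (hc : E c) (ha : c ≫ pA = a) (hf₁ : c ≫ pB = f₁) :
    IsDblExt E f₁ a b f₀ :=
  ⟨hf₁ ▸ E.comp_mem _ _ hc (E.of_isPullback hP hf₀),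
    ha ▸ E.comp_mem _ _ hc (E.of_isPullback hP.flip hb), hb, hf₀, P, pA, pB, c, hP, ha, hf₁, hc⟩

theorem of_isIso (hE : MorphismProperty.isomorphisms C ≤ E) {A₁ A₀ B₁ B₀ : C}
    {f₁ : A₁ ⟶ B₁} {a : A₁ ⟶ A₀} {b : B₁ ⟶ B₀} {f₀ : A₀ ⟶ B₀} (ha : E a) (hb : E b)
    [IsIso f₁] [IsIso f₀] (w : f₁ ≫ b = a ≫ f₀) : IsDblExt E f₁ a b f₀ :=
  ⟨hE _ (.infer_property f₁), ha, hb, hE _ (.infer_property f₀), A₁, a, f₁, 𝟙 A₁,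
    IsPullback.of_vert_isIso ⟨w.symm⟩, Category.id_comp a, Category.id_comp f₁,
    hE _ (.infer_property _)⟩

variable [E.IsStableUnderBaseChange] [E.IsStableUnderComposition]

theorem comp {A₁ A₀ B₁ B₀ C₁ C₀ : C} {a : A₁ ⟶ A₀} {b : B₁ ⟶ B₀} {c : C₁ ⟶ C₀}
    {f₁ : A₁ ⟶ B₁} {f₀ : A₀ ⟶ B₀} {g₁ : B₁ ⟶ C₁} {g₀ : B₀ ⟶ C₀} [E.HasPullbacksAlong f₀]
    (hf : IsDblExt E f₁ a b f₀) (hg : IsDblExt E g₁ b c g₀) :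
    IsDblExt E (f₁ ≫ g₁) a c (f₀ ≫ g₀) := by
  obtain ⟨-, -, -, hf₀, P', pA', pB', c₁, hP', rfl, rfl, hc₁⟩ := hf
  obtain ⟨-, -, hc, hg₀, Q, qB, qC, d, hQ, rfl, rfl, hd⟩ := hg
  have := MorphismProperty.HasPullbacksAlong.hasPullback (P := E) (f := f₀) qB
    (E.of_isPullback hQ.flip hc)
  have hP := (IsPullback.of_hasPullback qB f₀).flip
  have hm := hP.lift_isPullback_of_comp hP'
  exact of_isPullback (hP.paste_vert hQ) hc (E.comp_mem _ _ hf₀ hg₀)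
    (E.comp_mem _ _ hc₁ (E.of_isPullback hm.flip hd)) (by simp) (by simp)

theorem baseChange {X₁ X₀ Y₁ Y₀ Z₁ Z₀ P₁ P₀ : C} {x : X₁ ⟶ X₀} {y : Y₁ ⟶ Y₀}
    {z : Z₁ ⟶ Z₀} {g₁ : Y₁ ⟶ Z₁} {g₀ : Y₀ ⟶ Z₀} {h₁ : X₁ ⟶ Z₁} {h₀ : X₀ ⟶ Z₀}
    [E.HasPullbacksAlong h₁] (hg : IsDblExt E g₁ y z g₀) (hx : E x) (w : h₁ ≫ z = x ≫ h₀)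
    {u₁ : P₁ ⟶ X₁} {v₁ : P₁ ⟶ Y₁} (hP₁ : IsPullback u₁ v₁ h₁ g₁)
    {u₀ : P₀ ⟶ X₀} {v₀ : P₀ ⟶ Y₀} (hP₀ : IsPullback u₀ v₀ h₀ g₀)
    {p : P₁ ⟶ P₀} (hpu : p ≫ u₀ = u₁ ≫ x) (hpv : p ≫ v₀ = v₁ ≫ y) :
    IsDblExt E u₁ p x u₀ := by
  obtain ⟨-, -, -, hg₀, Q, qA, qB, e, hQ, rfl, rfl, he⟩ := hg
  have := MorphismProperty.HasPullbacksAlong.hasPullback (P := E) (f := h₁) qB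
    (E.of_isPullback hQ hg₀)
  have hS := (IsPullback.of_hasPullback qB h₁).flip
  have hσ := hP₀.of_isPullback_cube w hQ hS (hP₀.lift_fst _ _ (by
    rw [Category.assoc, ← w, hS.w_assoc, ← hQ.w, Category.assoc])) (hP₀.lift_snd _ _ _)
  have hcc := hS.lift_isPullback_of_comp hP₁
  refine of_isPullback hσ hx (E.of_isPullback hP₀.flip hg₀) (E.of_isPullback hcc.flip he)
    (hP₀.hom_ext ?_ ?_) (hS.lift_fst _ _ _)
  · simp [hpu]
  · simp [hpv]

theorem exists_baseChange {X₁ X₀ Y₁ Y₀ Z₁ Z₀ : C} {x : X₁ ⟶ X₀} {y : Y₁ ⟶ Y₀}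
    {z : Z₁ ⟶ Z₀} {g₁ : Y₁ ⟶ Z₁} {g₀ : Y₀ ⟶ Z₀} {h₁ : X₁ ⟶ Z₁} {h₀ : X₀ ⟶ Z₀}
    [E.HasPullbacksAlong h₁] [E.HasPullbacksAlong h₀] (hg : IsDblExt E g₁ y z g₀) (hx : E x)
    (w : h₁ ≫ z = x ≫ h₀) :
    ∃ (P₁ P₀ : C) (u₁ : P₁ ⟶ X₁) (v₁ : P₁ ⟶ Y₁) (u₀ : P₀ ⟶ X₀) (v₀ : P₀ ⟶ Y₀)
      (p : P₁ ⟶ P₀), IsPullback u₁ v₁ h₁ g₁ ∧ IsPullback u₀ v₀ h₀ g₀ ∧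
        p ≫ u₀ = u₁ ≫ x ∧ p ≫ v₀ = v₁ ≫ y ∧ IsDblExt E u₁ p x u₀ := by
  have := MorphismProperty.HasPullbacksAlong.hasPullback (P := E) (f := h₁) g₁ hg.1
  have := MorphismProperty.HasPullbacksAlong.hasPullback (P := E) (f := h₀) g₀ hg.2.2.2.1
  have hP₁ := (IsPullback.of_hasPullback g₁ h₁).flip
  have hP₀ := (IsPullback.of_hasPullback g₀ h₀).flip
  have hpw : (pullback.snd g₁ h₁ ≫ x) ≫ h₀ = (pullback.fst g₁ h₁ ≫ y) ≫ g₀ := by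
    rw [Category.assoc, ← w, hP₁.w_assoc, Category.assoc, hg.w]
  exact ⟨_, _, _, _, _, _, hP₀.lift _ _ hpw, hP₁, hP₀, hP₀.lift_fst _ _ _, hP₀.lift_snd _ _ _,
    hg.baseChange hx w hP₁ hP₀ (hP₀.lift_fst _ _ _) (hP₀.lift_snd _ _ _)⟩

end IsDblExt

/-- if `(A, E)` satisfies (E1)–(E3), then the class `E¹` of double
extensions in `Ext A` again satisfies (E1)–(E3): every isomorphism of extensions is
a double extension; pullbacks of double extensions along squares between extensions
exist in `Ext A` (computed degreewise) and are double extensions; and double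
extensions are closed under composition. -/
theorem stmt17 {C : Type*} [Category C] (E : MorphismProperty C)
    (hE1 : ∀ {X Y : C} (f : X ⟶ Y), IsIso f → E f)
    (hE2exists : ∀ {X Y Z : C} (f : X ⟶ Z) (g : Y ⟶ Z), E f → HasPullback g f)
    (hE2stable : ∀ {P X Y Z : C} (fst : P ⟶ X) (snd : P ⟶ Y) (f : X ⟶ Z) (g : Y ⟶ Z),
      IsPullback fst snd f g → E g → E fst)
    (hE3 : ∀ {X Y Z : C} (f : X ⟶ Y) (g : Y ⟶ Z), E f → E g → E (f ≫ g)) :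
    -- (E1) for E¹: isomorphisms of extensions are double extensions
    (∀ {A₁ A₀ B₁ B₀ : C} (x : A₁ ⟶ A₀) (y : B₁ ⟶ B₀) (f₁ : A₁ ⟶ B₁) (f₀ : A₀ ⟶ B₀),
      E x → E y → IsIso f₁ → IsIso f₀ → f₁ ≫ y = x ≫ f₀ →
      IsDblExt E f₁ x y f₀) ∧
    -- (E2) for E¹: degreewise pullbacks of double extensions along squares between
    -- extensions exist and are double extensions
    (∀ {X₁ X₀ Y₁ Y₀ Z₁ Z₀ : C} (x : X₁ ⟶ X₀) (y : Y₁ ⟶ Y₀) (z : Z₁ ⟶ Z₀)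
      (g₁ : Y₁ ⟶ Z₁) (g₀ : Y₀ ⟶ Z₀) (h₁ : X₁ ⟶ Z₁) (h₀ : X₀ ⟶ Z₀),
      E x → E y → E z → h₁ ≫ z = x ≫ h₀ → IsDblExt E g₁ y z g₀ →
      ∃ (P₁ P₀ : C) (u₁ : P₁ ⟶ X₁) (v₁ : P₁ ⟶ Y₁) (u₀ : P₀ ⟶ X₀) (v₀ : P₀ ⟶ Y₀)
        (p : P₁ ⟶ P₀),
        IsPullback u₁ v₁ h₁ g₁ ∧ IsPullback u₀ v₀ h₀ g₀ ∧
        p ≫ u₀ = u₁ ≫ x ∧ p ≫ v₀ = v₁ ≫ y ∧ E p ∧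
        IsDblExt E u₁ p x u₀) ∧
    -- (E3) for E¹: double extensions are closed under composition
    (∀ {A₁ A₀ B₁ B₀ C₁ C₀ : C} (a : A₁ ⟶ A₀) (b : B₁ ⟶ B₀) (c : C₁ ⟶ C₀)
      (f₁ : A₁ ⟶ B₁) (f₀ : A₀ ⟶ B₀) (g₁ : B₁ ⟶ C₁) (g₀ : B₀ ⟶ C₀),
      IsDblExt E f₁ a b f₀ → IsDblExt E g₁ b c g₀ →
      IsDblExt E (f₁ ≫ g₁) a c (f₀ ≫ g₀)) := by
  have : E.IsStableUnderBaseChange := ⟨fun sq hg => hE2stable _ _ _ _ sq.flip hg⟩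
  have : E.IsStableUnderComposition := ⟨hE3⟩
  have {X Y : C} (f : X ⟶ Y) : E.HasPullbacksAlong f :=
    ⟨fun g hg => have := hE2exists g f hg; hasPullback_symmetry f g⟩
  refine ⟨?_, ?_, fun _ _ _ _ _ _ _ hf hg => hf.comp hg⟩
  · intro _ _ _ _ x y f₁ f₀ hx hy _ _ w
    exact IsDblExt.of_isIso (fun _ _ f hf => hE1 f hf) hx hy w
  · intro _ _ _ _ _ _ x y z g₁ g₀ h₁ h₀ hx _ _ w hg
    obtain ⟨P₁, P₀, u₁, v₁, u₀, v₀, p, hP₁, hP₀, hpu, hpv, hp⟩ :=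
      hg.exists_baseChange hx w
    exact ⟨P₁, P₀, u₁, v₁, u₀, v₀, p, hP₁, hP₀, hpu, hpv, hp.2.1, hp⟩
end
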